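/- arXiv:2510.07560 — 5 statements merged into one kernel-verified Lean document; each statement's English description precedes it below -/
import Mathlib

section
/- Let v ∈ S_n, fix i' ∈ [n], let v' = del_{i'}(v) ∈ S_{n−1}, and let φ = φ_{i', v(i')}. For every k ∈ [n] with drift_v(i', v(i')) < k, the map φ restricts to a bijection from {(i, v(i)) : i ∈ [n] ∖ {i'}, drift_v(i, v(i)) < k} onto {(i, v'(i)) : i ∈ [n−1], drift_{v'}(i, v'(i)) < k − 1}. -/
namespace GCS

/-- Given a labelled word whose letter `cl` plays the role of a closing bracket `)` and
whose letter `op` plays the role of an opening bracket `(`, with `o` the number of currently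
unmatched opening brackets seen so far, return the label of the rightmost unmatched
closing bracket (or `none` if every closing bracket is matched). -/
def lastUnmatched {β : Type} (cl op : ℕ) : List (ℕ × β) → ℕ → Option β
  | [], _ => none
  | (a, lbl) :: rest, o =>
    if a = cl then
      if o = 0 then
        match lastUnmatched cl op rest 0 with
        | some x => some x
        | none => some lbl
      else lastUnmatched cl op rest (o - 1)
    else if a = op then lastUnmatched cl op rest (o + 1)
    else lastUnmatched cl op rest o

variable {m n : ℕ}

/-- The labelled row word of a matrix of nonnegative integers: read the columns left to
right, each column top to bottom, recording `M r c` copies of the (1-based) row index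
`r + 1`, each labelled by its column `c`. -/
def rowWordLbl (M : Matrix (Fin m) (Fin n) ℕ) : List (ℕ × Fin n) :=
  (List.finRange n).flatMap fun c =>
    (List.finRange m).flatMap fun r => List.replicate (M r c) (r.1 + 1, c)

/-- The row word `row(M)` (letters are 1-based row indices). -/
def rowWord (M : Matrix (Fin m) (Fin n) ℕ) : List ℕ := (rowWordLbl M).map Prod.fst

/-- The column word `col(M) = row(Mᵀ)`. -/
def colWord (M : Matrix (Fin m) (Fin n) ℕ) : List ℕ := rowWord M.transpose

/-- The lowering bicrystal operator `f_i^row` (here `i` is the 1-based row index,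
`1 ≤ i ≤ m - 1`): locate the rightmost unmatched `)` in `bracket_i(row(M))`, coming from an
entry in row `i` and some column `c`; decrease that entry by one and increase the entry of
row `i+1`, column `c` by one.  Returns `none` if every `)` is matched. -/
def frow (i : ℕ) (M : Matrix (Fin m) (Fin n) ℕ) : Option (Matrix (Fin m) (Fin n) ℕ) :=
  (lastUnmatched i (i + 1) (rowWordLbl M) 0).map fun c =>
    Matrix.of fun a b =>
      if a.1 + 1 = i ∧ b = c then M a b - 1
      else if a.1 + 1 = i + 1 ∧ b = c then M a b + 1
      else M a b

/-- The raising bicrystal operator `e_i^row`: locate the leftmost unmatched `(` in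
`bracket_i(row(M))`, coming from an entry in row `i+1` and some column `c`; decrease that
entry by one and increase the entry of row `i`, column `c` by one. -/
def erow (i : ℕ) (M : Matrix (Fin m) (Fin n) ℕ) : Option (Matrix (Fin m) (Fin n) ℕ) :=
  (lastUnmatched (i + 1) i (rowWordLbl M).reverse 0).map fun c =>
    Matrix.of fun a b =>
      if a.1 + 1 = i + 1 ∧ b = c then M a b - 1
      else if a.1 + 1 = i ∧ b = c then M a b + 1
      else M a b

/-- `f_j^col(M) = (f_j^row(Mᵀ))ᵀ`. -/
def fcol (j : ℕ) (M : Matrix (Fin m) (Fin n) ℕ) : Option (Matrix (Fin m) (Fin n) ℕ) :=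
  (frow j M.transpose).map Matrix.transpose

/-- `e_j^col(M) = (e_j^row(Mᵀ))ᵀ`. -/
def ecol (j : ℕ) (M : Matrix (Fin m) (Fin n) ℕ) : Option (Matrix (Fin m) (Fin n) ℕ) :=
  (erow j M.transpose).map Matrix.transpose

/-- `I` is (the set of cut indices of) a Levi datum for size `m`:
`I = {0 = i_0 < i_1 < ⋯ < i_r = m}`. -/
def IsLeviDatum (m : ℕ) (I : Finset ℕ) : Prop := 0 ∈ I ∧ m ∈ I ∧ ∀ x ∈ I, x ≤ m

/-- The admissible bicrystal operators for the Levi datum `(𝐈, 𝐉)` are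
`f_i^row, e_i^row` for `i ∉ 𝐈` and `f_j^col, e_j^col` for `j ∉ 𝐉`. -/
def AdmissibleOp (m n : ℕ) (I J : Finset ℕ)
    (φ : Matrix (Fin m) (Fin n) ℕ → Option (Matrix (Fin m) (Fin n) ℕ)) : Prop :=
  (∃ i, 0 < i ∧ i < m ∧ i ∉ I ∧ (φ = frow i ∨ φ = erow i)) ∨
  (∃ j, 0 < j ∧ j < n ∧ j ∉ J ∧ (φ = fcol j ∨ φ = ecol j))

/-- A set `S` of exponent matrices is `(𝐈,𝐉)`-bicrystal closed if `φ(M) ∈ S ∪ {∅}` for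
every admissible operator `φ` and every `M ∈ S`. -/
def BicrystalClosed (m n : ℕ) (I J : Finset ℕ) (S : Set (Matrix (Fin m) (Fin n) ℕ)) : Prop :=
  ∀ φ, AdmissibleOp m n I J φ → ∀ M ∈ S, ∀ N, φ M = some N → N ∈ S

/-- A term order on monomials in variables indexed by `σ`: a linear order on exponent
vectors compatible with addition and having `0` (i.e. the monomial `1`) as minimum. -/
structure TermOrder (σ : Type) where
  le : (σ →₀ ℕ) → (σ →₀ ℕ) → Prop
  le_refl : ∀ u, le u u
  le_trans : ∀ u v w, le u v → le v w → le u w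
  le_antisymm : ∀ u v, le u v → le v u → u = v
  le_total : ∀ u v, le u v ∨ le v u
  add_le_add : ∀ u v w, le u v → le (u + w) (v + w)
  zero_le : ∀ u, le 0 u

/-- `u` is the exponent vector of the initial term `init_≺ f`: it lies in the support of
`f` and is `≺`-largest among the monomials of `f`.  (If `f = 0`, no `u` satisfies this.) -/
def IsInitExp {σ : Type} (ord : TermOrder σ) (f : MvPolynomial σ ℂ) (u : σ →₀ ℕ) : Prop :=
  u ∈ f.support ∧ ∀ v ∈ f.support, ord.le v u

/-- The initial ideal `init_≺ I = ⟨init_≺ f : f ∈ I, f ≠ 0⟩`. -/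
noncomputable def initialIdeal {σ : Type} (ord : TermOrder σ) (I : Ideal (MvPolynomial σ ℂ)) :
    Ideal (MvPolynomial σ ℂ) :=
  Ideal.span {p | ∃ f ∈ I, ∃ u, IsInitExp ord f u ∧ p = MvPolynomial.monomial u (1 : ℂ)}

/-- The exponent vector of the monomial `z^M` attached to the matrix `M`. -/
noncomputable def expOf (M : Matrix (Fin m) (Fin n) ℕ) : (Fin m × Fin n) →₀ ℕ :=
  Finsupp.equivFunOnFinite.symm fun p => M p.1 p.2

/-- `Mat_≺ I`, the set of exponent matrices of monomials lying in `init_≺ I`. -/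
def matLT (ord : TermOrder (Fin m × Fin n)) (I : Ideal (MvPolynomial (Fin m × Fin n) ℂ)) :
    Set (Matrix (Fin m) (Fin n) ℕ) :=
  {M | MvPolynomial.monomial (expOf M) (1 : ℂ) ∈ initialIdeal ord I}

/-- Indices `a`, `b` (0-based) lie in the same diagonal block determined by the cuts `I`. -/
def SameBlock (I : Finset ℕ) (a b : ℕ) : Prop := ∀ i ∈ I, (a < i ↔ b < i)

/-- `g` belongs to the block-diagonal Levi subgroup `L_𝐈 ≤ GL_m`: `g` is invertible and
vanishes outside the diagonal blocks cut out by `I`. -/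
def InLevi {m : ℕ} (I : Finset ℕ) (g : Matrix (Fin m) (Fin m) ℂ) : Prop :=
  IsUnit g ∧ ∀ a b : Fin m, ¬ SameBlock I a.1 b.1 → g a b = 0

/-- The action of the pair `(g, h)` on `ℂ[Mat_{m,n}]`: `((g,h)·f)(Z) = f(g Z hᵀ)`,
i.e. the substitution `z_{ab} ↦ ∑_{c,d} g_{ac} h_{bd} z_{cd}`. -/
noncomputable def leviAct (g : Matrix (Fin m) (Fin m) ℂ) (h : Matrix (Fin n) (Fin n) ℂ) :
    MvPolynomial (Fin m × Fin n) ℂ →ₐ[ℂ] MvPolynomial (Fin m × Fin n) ℂ :=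
  MvPolynomial.aeval fun p => ∑ c : Fin m, ∑ d : Fin n,
    MvPolynomial.C (g p.1 c * h p.2 d) * MvPolynomial.X (c, d)

/-- The ideal `Idl` is stable under the action of `L_𝐈 × L_𝐉`. -/
def LeviStable (I J : Finset ℕ) (Idl : Ideal (MvPolynomial (Fin m × Fin n) ℂ)) : Prop :=
  ∀ g h, InLevi I g → InLevi J h → ∀ f ∈ Idl, leviAct g h f ∈ Idl

/-- An `L_𝐈 × L_𝐉`-stable ideal `Idl` is `(𝐈,𝐉,≺)`-bicrystalline: the set of exponent
matrices of the standard monomials (monomials not in `init_≺ Idl`) is bicrystal closed. -/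
def IsBicrystalline (m n : ℕ) (I J : Finset ℕ) (ord : TermOrder (Fin m × Fin n))
    (Idl : Ideal (MvPolynomial (Fin m × Fin n) ℂ)) : Prop :=
  LeviStable I J Idl ∧ BicrystalClosed m n I J {M | M ∉ matLT ord Idl}

/-- `z^a` divides `z^b` entrywise, both optional values being defined. -/
def OptDvd (x y : Option (Matrix (Fin m) (Fin n) ℕ)) : Prop :=
  ∃ a b, x = some a ∧ y = some b ∧ ∀ p q, a p q ≤ b p q

/-- `T` is a test set for `(Idl, ≺, φ)`: a finite subset of `Mat_≺ Idl` such that for every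
`M ∈ Mat_≺ Idl` with `φ(M) ≠ ∅` there is `N ∈ T` with `φ(N) ≠ ∅`, `z^N ∣ z^M` and
`z^{φ(N)} ∣ z^{φ(M)}`. -/
def IsTestSet (ord : TermOrder (Fin m × Fin n)) (Idl : Ideal (MvPolynomial (Fin m × Fin n) ℂ))
    (φ : Matrix (Fin m) (Fin n) ℕ → Option (Matrix (Fin m) (Fin n) ℕ))
    (T : Set (Matrix (Fin m) (Fin n) ℕ)) : Prop :=
  T.Finite ∧ T ⊆ matLT ord Idl ∧
  ∀ M ∈ matLT ord Idl, (∃ M', φ M = some M') →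
    ∃ N ∈ T, (∀ p q, N p q ≤ M p q) ∧ OptDvd (φ N) (φ M)

/-- `T` is a test set that is minimal with respect to containment among all test sets. -/
def MinimalTestSet (ord : TermOrder (Fin m × Fin n))
    (Idl : Ideal (MvPolynomial (Fin m × Fin n) ℂ))
    (φ : Matrix (Fin m) (Fin n) ℕ → Option (Matrix (Fin m) (Fin n) ℕ))
    (T : Set (Matrix (Fin m) (Fin n) ℕ)) : Prop :=
  IsTestSet ord Idl φ T ∧ ∀ T', IsTestSet ord Idl φ T' → T' ⊆ T → T' = T

/-- The entry of `M` in 1-based row `r` and column `c` (0 outside the matrix). -/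
def entRow (M : Matrix (Fin m) (Fin n) ℕ) (r : ℕ) (c : Fin n) : ℕ :=
  if h : 1 ≤ r ∧ r ≤ m then M ⟨r - 1, by omega⟩ c else 0

/-- The generic `d × d` minor of `Z` with row set `r` and column set `c`. -/
noncomputable def genMinor (m n d : ℕ) (r : Fin d → Fin m) (c : Fin d → Fin n) :
    MvPolynomial (Fin m × Fin n) ℂ :=
  (Matrix.of fun i j : Fin d => MvPolynomial.X (r i, c j)).det

/-- The exponent vector of the antidiagonal term of the minor with rows `r`, columns `c`. -/
noncomputable def antidiagExp (m n d : ℕ) (r : Fin d → Fin m) (c : Fin d → Fin n) :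
    (Fin m × Fin n) →₀ ℕ :=
  ∑ i : Fin d, Finsupp.single (r i, c i.rev) 1

/-- `ord` is an antidiagonal term order: the lead term of every minor of the generic
matrix `Z` is its antidiagonal term. -/
def IsAntidiagonalOrder (m n : ℕ) (ord : TermOrder (Fin m × Fin n)) : Prop :=
  ∀ d, 0 < d → ∀ (r : Fin d → Fin m) (c : Fin d → Fin n), StrictMono r → StrictMono c →
    IsInitExp ord (genMinor m n d r c) (antidiagExp m n d r c)

/-- All `d × d` minors of the contiguous submatrix `[a,a'] × [b,b']` of `Z`
(1-based bounds). -/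
def minorsOfSub (m n : ℕ) (a a' b b' d : ℕ) : Set (MvPolynomial (Fin m × Fin n) ℂ) :=
  {p | ∃ (r : Fin d → Fin m) (c : Fin d → Fin n), StrictMono r ∧ StrictMono c ∧
    (∀ i, a ≤ (r i).1 + 1 ∧ (r i).1 + 1 ≤ a') ∧
    (∀ j, b ≤ (c j).1 + 1 ∧ (c j).1 + 1 ≤ b') ∧ p = genMinor m n d r c}

/-- `G` is a Gröbner basis of `Idl` with respect to `ord`:
`G ⊆ Idl` and `init_≺ Idl = ⟨init_≺ g : g ∈ G⟩`. -/
def IsGroebnerBasis (ord : TermOrder (Fin m × Fin n))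
    (Idl : Ideal (MvPolynomial (Fin m × Fin n) ℂ))
    (G : Set (MvPolynomial (Fin m × Fin n) ℂ)) : Prop :=
  G ⊆ (Idl : Set (MvPolynomial (Fin m × Fin n) ℂ)) ∧
  initialIdeal ord Idl =
    Ideal.span {p | ∃ g ∈ G, ∃ u, IsInitExp ord g u ∧ p = MvPolynomial.monomial u (1 : ℂ)}

/-- The priority of the variable `z_{ij}` in the variable order
`z_{1n} ≻ z_{1,n-1} ≻ ⋯ ≻ z_{11} ≻ z_{2n} ≻ ⋯ ≻ z_{m1}` (smaller rank = larger variable). -/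
def lexRank (m n : ℕ) (p : Fin m × Fin n) : ℕ := p.1.1 * n + (n - 1 - p.2.1)

/-- `ord` is the (antidiagonal) lexicographic term order determined by the variable order
`z_{1n} ≻ z_{1,n-1} ≻ ⋯ ≻ z_{11} ≻ z_{2n} ≻ ⋯ ≻ z_{m1}`. -/
def IsAntidiagLex (m n : ℕ) (ord : TermOrder (Fin m × Fin n)) : Prop :=
  ∀ u v, ord.le u v ↔
    u = v ∨ ∃ p, u p < v p ∧ ∀ q, lexRank m n q < lexRank m n p → u q = v q

/-- The rank function `r_v(i,j) = #{k ≤ i : v(k) ≤ j}` (1-based), at 0-based `(i,j)`. -/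
def rankP (N : ℕ) (v : Equiv.Perm (Fin N)) (i j : Fin N) : ℕ :=
  (Finset.univ.filter fun k : Fin N => k ≤ i ∧ v k ≤ j).card

/-- The antidiagonal drift `drift_v(i,j) = i + j - 1 - r_v(i,j)` (1-based), at 0-based
`(i,j)`. -/
def driftP (N : ℕ) (v : Equiv.Perm (Fin N)) (i j : Fin N) : ℕ :=
  i.1 + j.1 + 1 - rankP N v i j

/-- The specialized matrix `Z_v`: ones on the permutation positions, zeros southwest-ward
of them (positions `(i,j)` with `j > v(i)` or `i > v⁻¹(j)`), variables elsewhere. -/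
noncomputable def Zv (N : ℕ) (v : Equiv.Perm (Fin N)) :
    Matrix (Fin N) (Fin N) (MvPolynomial (Fin N × Fin N) ℂ) :=
  Matrix.of fun i j =>
    if v i = j then 1 else if v i < j ∨ v.symm j < i then 0 else MvPolynomial.X (i, j)

/-- The `k`-th basic minor `Δ_v^{(k)}`: the determinant of the northwest-justified
`k × k` submatrix of `Z_v`. -/
noncomputable def basicMinor (N k : ℕ) (hk : k ≤ N) (v : Equiv.Perm (Fin N)) :
    MvPolynomial (Fin N × Fin N) ℂ :=
  (Matrix.of fun i j : Fin k => Zv N v (Fin.castLE hk i) (Fin.castLE hk j)).det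

/-- The one-coordinate index-deletion map underlying `φ_{i,j}`: delete the index `i`
from `[n+1]`, renumbering the indices above `i` down by one. -/
def delIdx {N : ℕ} (i a : Fin (N + 1)) (h : a ≠ i) : Fin N :=
  if hlt : a.1 < i.1 then ⟨a.1, by have := i.isLt; omega⟩
  else ⟨a.1 - 1, by
    have h1 := a.isLt
    have h2 : a.1 ≠ i.1 := fun hh => h (Fin.ext hh)
    omega⟩

/-- Row insertion `T ← x` for a tableau given as its list of rows (top to bottom). -/
def rowInsert : List (List ℕ) → ℕ → List (List ℕ)
  | [], x => [[x]]
  | row :: rest, x =>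
    match row.findIdx? (fun y => decide (x < y)) with
    | none => (row ++ [x]) :: rest
    | some k => (row.set k x) :: rowInsert rest (row.getD k 0)

/-- The insertion tableau `tab(w)` of a word `w`. -/
def tab (w : List ℕ) : List (List ℕ) := w.foldl rowInsert []

/-- The `RSK` correspondence: `RSK(M) = (tab(row(M)), tab(col(M)))`. -/
def RSKmap (M : Matrix (Fin m) (Fin n) ℕ) : List (List ℕ) × List (List ℕ) :=
  (tab (rowWord M), tab (colWord M))

/-- The column reading word of a tableau, with each letter labelled by its box `(row, col)`:
entries are read along columns bottom-to-top, left-to-right. -/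
def tabWordLbl (T : List (List ℕ)) : List (ℕ × (ℕ × ℕ)) :=
  (List.range (T.getD 0 []).length).flatMap fun j =>
    ((List.range T.length).reverse).filterMap fun r =>
      ((T.getD r [])[j]?).map fun x => (x, (r, j))

/-- The column reading word `word(T)` (columns bottom-to-top, left-to-right). -/
def tabWord (T : List (List ℕ)) : List ℕ := (tabWordLbl T).map Prod.fst

/-- Replace the entry of `T` in box `(r, j)` by `v`. -/
def setBox (T : List (List ℕ)) (r j v : ℕ) : List (List ℕ) :=
  T.set r ((T.getD r []).set j v)

/-- The tableau crystal lowering operator `f_i`: change the `i` of `T` corresponding to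
the rightmost unmatched `)` of `bracket_i(word(T))` into an `i + 1` (or `∅`). -/
def fTab (i : ℕ) (T : List (List ℕ)) : Option (List (List ℕ)) :=
  (lastUnmatched i (i + 1) (tabWordLbl T) 0).map fun p => setBox T p.1 p.2 (i + 1)

/-- The tableau crystal raising operator `e_i`: change the `i + 1` of `T` corresponding to
the leftmost unmatched `(` of `bracket_i(word(T))` into an `i` (or `∅`). -/
def eTab (i : ℕ) (T : List (List ℕ)) : Option (List (List ℕ)) :=
  (lastUnmatched (i + 1) i (tabWordLbl T).reverse 0).map fun p => setBox T p.1 p.2 i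

/-- `T` (a list of rows, top to bottom) is a semistandard Young tableau with positive
integer entries. -/
def IsSSYT (T : List (List ℕ)) : Prop :=
  (∀ r ∈ T, r ≠ []) ∧
  (∀ r ∈ T, List.Chain' (· ≤ ·) r) ∧
  (∀ i, (T.getD (i + 1) []).length ≤ (T.getD i []).length) ∧
  (∀ i j, j < (T.getD (i + 1) []).length →
    (T.getD i []).getD j 0 < (T.getD (i + 1) []).getD j 0) ∧
  (∀ r ∈ T, ∀ x ∈ r, 1 ≤ x)

/-- `w` is `[a,b]`-ballot: every initial segment contains at least as many `i`s as
`(i+1)`s, for each `i ∈ [a, b-1]`. -/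
def IsBallot (a b : ℕ) (w : List ℕ) : Prop :=
  ∀ k i, a ≤ i → i + 1 ≤ b → (w.take k).count (i + 1) ≤ (w.take k).count i

/-- `T` is an `[a,b]`-Littlewood–Richardson tableau: `revword(T)|_{[a,b]}` is
`[a,b]`-ballot. -/
def IsLRInterval (a b : ℕ) (T : List (List ℕ)) : Prop :=
  IsBallot a b (((tabWord T).reverse).filter fun x => decide (a ≤ x ∧ x ≤ b))

/-- `T` is `𝐊`-LR for `𝐊 = {0 = k_0 < ⋯ < k_t = ℓ}`: `T` is `[k_{α-1}+1, k_α]`-LR for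
every pair of consecutive elements of `𝐊`. -/
def IsKLR (K : Finset ℕ) (T : List (List ℕ)) : Prop :=
  ∀ a b, a ∈ K → b ∈ K → a < b → (∀ x ∈ K, ¬(a < x ∧ x < b)) → IsLRInterval (a + 1) b T

/-- The `[a,b]`-width of a word: the maximum length of a strictly decreasing subsequence
of the restriction `u|_{[a,b]}`. -/
noncomputable def widthInterval (a b : ℕ) (u : List ℕ) : ℕ :=
  sSup {d | ∃ s : List ℕ, s.Sublist (u.filter fun x => decide (a ≤ x ∧ x ≤ b)) ∧
    List.Chain' (· > ·) s ∧ s.length = d}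

/-- The entry of `T` in box `p = (row, col)`. -/
def tabEntry (T : List (List ℕ)) (p : ℕ × ℕ) : ℕ := (T.getD p.1 []).getD p.2 0

/-- The `[a,b]`-width of a tableau: the maximum length of an `[a,b]`-antidiagonal, i.e. a
sequence of boxes of `T` from distinct rows with entries in `[a,b]`, each box weakly east
and strictly north of the previous one, whose entries strictly decrease read bottom to
top. -/
noncomputable def tabWidth (a b : ℕ) (T : List (List ℕ)) : ℕ :=
  sSup {d | ∃ L : List (ℕ × ℕ),
    (∀ p ∈ L, p.1 < T.length ∧ p.2 < (T.getD p.1 []).length ∧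
      a ≤ tabEntry T p ∧ tabEntry T p ≤ b) ∧
    List.Chain' (fun p q => q.1 < p.1 ∧ p.2 ≤ q.2 ∧ tabEntry T q < tabEntry T p) L ∧
    L.length = d}

/-- The maximum length of a sequence of nonzero entries of `M` in antidiagonal position
(row indices strictly decreasing, column indices strictly increasing along the sequence)
with all (1-based) row indices in `[a,b]`. -/
noncomputable def rowAntidiagWidth (a b : ℕ) (M : Matrix (Fin m) (Fin n) ℕ) : ℕ :=
  sSup {d | ∃ L : List (Fin m × Fin n),
    (∀ p ∈ L, M p.1 p.2 ≠ 0 ∧ a ≤ p.1.1 + 1 ∧ p.1.1 + 1 ≤ b) ∧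
    List.Chain' (fun p q => q.1 < p.1 ∧ p.2 < q.2) L ∧
    L.length = d}

/-- As `rowAntidiagWidth`, but with all (1-based) column indices in `[a,b]`. -/
noncomputable def colAntidiagWidth (a b : ℕ) (M : Matrix (Fin m) (Fin n) ℕ) : ℕ :=
  sSup {d | ∃ L : List (Fin m × Fin n),
    (∀ p ∈ L, M p.1 p.2 ≠ 0 ∧ a ≤ p.2.1 + 1 ∧ p.2.1 + 1 ≤ b) ∧
    List.Chain' (fun p q => q.1 < p.1 ∧ p.2 < q.2) L ∧
    L.length = d}

/-- An elementary Knuth transformation: `prq ≡ rpq` for `p ≤ q < r`, and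
`qpr ≡ qrp` for `p < q ≤ r`. -/
inductive KnuthStep : List ℕ → List ℕ → Prop
  | swap1 (u v : List ℕ) (p q r : ℕ) (h1 : p ≤ q) (h2 : q < r) :
      KnuthStep (u ++ p :: r :: q :: v) (u ++ r :: p :: q :: v)
  | swap2 (u v : List ℕ) (p q r : ℕ) (h1 : p < q) (h2 : q ≤ r) :
      KnuthStep (u ++ q :: p :: r :: v) (u ++ q :: r :: p :: v)

/-- Knuth equivalence of words. -/
def KnuthEquiv : List ℕ → List ℕ → Prop := Relation.EqvGen KnuthStep

section DelBijHelpers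

variable {N : ℕ}

lemma delIdx_val (i' a : Fin (N + 1)) (h : a ≠ i') :
    (delIdx i' a h).1 = if a.1 < i'.1 then a.1 else a.1 - 1 := by
  unfold delIdx; split <;> rfl

lemma val_ne_of_ne {a b : Fin (N + 1)} (h : a ≠ b) : a.1 ≠ b.1 :=
  fun hh => h (Fin.ext hh)

/-- Insertion of an index, inverse to `delIdx`. -/
def insIdx (i' : Fin (N + 1)) (c : Fin N) : Fin (N + 1) :=
  if c.1 < i'.1 then ⟨c.1, by have := c.isLt; omega⟩
  else ⟨c.1 + 1, by have := c.isLt; omega⟩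

lemma insIdx_val (i' : Fin (N + 1)) (c : Fin N) :
    (insIdx i' c).1 = if c.1 < i'.1 then c.1 else c.1 + 1 := by
  unfold insIdx; split <;> rfl

lemma insIdx_ne (i' : Fin (N + 1)) (c : Fin N) : insIdx i' c ≠ i' := by
  intro h
  have h2 := congrArg Fin.val h
  rw [insIdx_val] at h2
  split at h2 <;> omega

lemma delIdx_insIdx (i' : Fin (N + 1)) (c : Fin N) (h : insIdx i' c ≠ i') :
    delIdx i' (insIdx i' c) h = c := by
  apply Fin.ext
  rw [delIdx_val, insIdx_val]
  split_ifs <;> omega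

lemma delIdx_le_iff (i' : Fin (N + 1)) (a b : Fin (N + 1)) (ha : a ≠ i') (hb : b ≠ i') :
    delIdx i' a ha ≤ delIdx i' b hb ↔ a ≤ b := by
  have h1 := val_ne_of_ne ha
  have h2 := val_ne_of_ne hb
  rw [Fin.le_def, Fin.le_def, delIdx_val, delIdx_val]
  split_ifs <;> omega

lemma delIdx_inj (i' : Fin (N + 1)) (a b : Fin (N + 1)) (ha : a ≠ i') (hb : b ≠ i')
    (h : delIdx i' a ha = delIdx i' b hb) : a = b := by
  have h1 := val_ne_of_ne ha
  have h2 := val_ne_of_ne hb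
  have h3 := congrArg Fin.val h
  rw [delIdx_val, delIdx_val] at h3
  apply Fin.ext
  split_ifs at h3 <;> omega

lemma rankP_le (M : ℕ) (v : Equiv.Perm (Fin M)) (i j : Fin M) :
    rankP M v i j ≤ i.1 + 1 := by
  unfold rankP
  calc (Finset.univ.filter fun c : Fin M => c ≤ i ∧ v c ≤ j).card
      ≤ (Finset.Iic i).card := by
        apply Finset.card_le_card
        intro c hc
        simp only [Finset.mem_filter] at hc
        simpa [Finset.mem_Iic] using hc.2.1
    _ = i.1 + 1 := Fin.card_Iic i

lemma rank_del (n : ℕ) (v : Equiv.Perm (Fin (n + 1))) (i' : Fin (n + 1))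
    (v' : Equiv.Perm (Fin n))
    (hv' : ∀ (c : Fin (n + 1)) (h : c ≠ i'),
      v' (delIdx i' c h) = delIdx (v i') (v c) (fun hh => h (v.injective hh)))
    (i : Fin (n + 1)) (h : i ≠ i') :
    rankP (n + 1) v i (v i)
      = rankP n v' (delIdx i' i h) (v' (delIdx i' i h))
        + (if i' < i ∧ v i' < v i then 1 else 0) := by
  classical
  set i'' := delIdx i' i h with hi''
  unfold rankP
  set S : Finset (Fin (n + 1)) := Finset.univ.filter (fun c => c ≤ i ∧ v c ≤ v i) with hS
  have hmem : i' ∈ S ↔ (i' < i ∧ v i' < v i) := by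
    simp only [hS, Finset.mem_filter, Finset.mem_univ, true_and]
    constructor
    · rintro ⟨h1, h2⟩
      exact ⟨lt_of_le_of_ne h1 (Ne.symm h),
        lt_of_le_of_ne h2 (fun hh => h (v.injective hh.symm))⟩
    · rintro ⟨h1, h2⟩; exact ⟨le_of_lt h1, le_of_lt h2⟩
  have hcard : (S.erase i').card
      = (Finset.univ.filter fun c'' : Fin n => c'' ≤ i'' ∧ v' c'' ≤ v' i'').card := by
    apply Finset.card_bij (fun c hc => delIdx i' c (Finset.mem_erase.mp hc).1)
    · intro c hc
      obtain ⟨hcne, hcS⟩ := Finset.mem_erase.mp hc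
      simp only [hS, Finset.mem_filter, Finset.mem_univ, true_and] at hcS
      simp only [Finset.mem_filter, Finset.mem_univ, true_and]
      constructor
      · rw [hi'']; exact (delIdx_le_iff i' c i hcne h).mpr hcS.1
      · rw [hv' c hcne, hi'', hv' i h]
        exact (delIdx_le_iff (v i') (v c) (v i) _ _).mpr hcS.2
    · intro a ha b hb hab
      exact delIdx_inj i' a b _ _ hab
    · intro b hb
      simp only [Finset.mem_filter, Finset.mem_univ, true_and] at hb
      have hne := insIdx_ne i' b
      have hdel : delIdx i' (insIdx i' b) hne = b := delIdx_insIdx i' b hne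
      have hle1 : insIdx i' b ≤ i := by
        rw [← delIdx_le_iff i' (insIdx i' b) i hne h, hdel, ← hi'']
        exact hb.1
      have hle2 : v (insIdx i' b) ≤ v i := by
        have h2 := hb.2
        rw [← hdel, hv' (insIdx i' b) hne, hi'', hv' i h] at h2
        exact (delIdx_le_iff (v i') (v (insIdx i' b)) (v i) _ _).mp h2
      refine ⟨insIdx i' b, ?_, hdel⟩
      rw [Finset.mem_erase]
      refine ⟨hne, ?_⟩
      simp only [hS, Finset.mem_filter, Finset.mem_univ, true_and]
      exact ⟨hle1, hle2⟩
  have hsplit : S.card = (S.erase i').card + (if i' < i ∧ v i' < v i then 1 else 0) := by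
    by_cases hm : i' ∈ S
    · rw [if_pos (hmem.mp hm)]
      exact (Finset.card_erase_add_one hm).symm
    · rw [if_neg (fun hx => hm (hmem.mpr hx)), Finset.erase_eq_of_notMem hm, add_zero]
  rw [hsplit, hcard]

lemma drift_nw_lt (M : ℕ) (v : Equiv.Perm (Fin M)) (i i' : Fin M)
    (hi : i < i') (hj : v i < v i') :
    driftP M v i (v i) < driftP M v i' (v i') := by
  classical
  set T : Finset (Fin M) := Finset.univ.filter (fun c => c ≤ i ∧ v c ≤ v i) with hT
  set T' : Finset (Fin M) := Finset.univ.filter (fun c => c ≤ i' ∧ v c ≤ v i') with hT'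
  set U : Finset (Fin M) := Finset.univ.filter (fun c => i < c ∧ c ≤ i') with hU
  set W : Finset (Fin M) := Finset.univ.filter (fun c => v i < v c ∧ v c < v i') with hW
  have hsub : T' ⊆ T ∪ U ∪ W := by
    intro c hc
    simp only [hT, hT', hU, hW, Finset.mem_filter, Finset.mem_union, Finset.mem_univ,
      true_and] at hc ⊢
    obtain ⟨hc1, hc2⟩ := hc
    by_cases h1 : c ≤ i
    · by_cases h2 : v c ≤ v i
      · exact Or.inl (Or.inl ⟨h1, h2⟩)
      · refine Or.inr ⟨lt_of_not_ge h2, lt_of_le_of_ne hc2 ?_⟩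
        intro he
        have hci : c = i' := v.injective he
        subst hci
        exact absurd (lt_of_le_of_lt h1 hi) (lt_irrefl c)
    · exact Or.inl (Or.inr ⟨lt_of_not_ge h1, hc1⟩)
  have hUcard : U.card = i'.1 - i.1 := by
    have : U = Finset.Ioc i i' := by
      ext c; simp [hU, Finset.mem_Ioc]
    rw [this, Fin.card_Ioc]
  have hWcard : W.card = (v i').1 - (v i).1 - 1 := by
    have : W.card = (Finset.Ioo (v i) (v i')).card := by
      apply Finset.card_equiv (v : Fin M ≃ Fin M)
      intro c
      simp [hW, Finset.mem_Ioo]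
    rw [this, Fin.card_Ioo]
  have hkey : T'.card ≤ T.card + U.card + W.card :=
    le_trans (Finset.card_le_card hsub)
      (le_trans (Finset.card_union_le _ _)
        (by exact Nat.add_le_add_right (Finset.card_union_le _ _) _))
  have hrT : rankP M v i (v i) = T.card := rfl
  have hrT' : rankP M v i' (v i') = T'.card := rfl
  have hb1 : T.card ≤ i.1 + 1 := by rw [← hrT]; exact rankP_le M v i (v i)
  have hb2 : T'.card ≤ i'.1 + 1 := by rw [← hrT']; exact rankP_le M v i' (v i')
  have hiv := Fin.lt_def.mp hi
  have hjv := Fin.lt_def.mp hj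
  rw [hUcard, hWcard] at hkey
  unfold driftP
  rw [hrT, hrT']
  omega

lemma drift_del (n : ℕ) (v : Equiv.Perm (Fin (n + 1))) (i' : Fin (n + 1))
    (v' : Equiv.Perm (Fin n))
    (hv' : ∀ (c : Fin (n + 1)) (h : c ≠ i'),
      v' (delIdx i' c h) = delIdx (v i') (v c) (fun hh => h (v.injective hh)))
    (i : Fin (n + 1)) (h : i ≠ i') :
    driftP (n + 1) v i (v i)
      = driftP n v' (delIdx i' i h) (v' (delIdx i' i h))
        + (if i' < i ∨ v i' < v i then 1 else 0) := by
  have hne1 : i.1 ≠ i'.1 := val_ne_of_ne h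
  have hne2 : (v i).1 ≠ (v i').1 := val_ne_of_ne (fun hh => h (v.injective hh))
  have hr := rank_del n v i' v' hv' i h
  have hb1 := rankP_le (n + 1) v i (v i)
  have hb2 := rankP_le n v' (delIdx i' i h) (v' (delIdx i' i h))
  have hiv := delIdx_val i' i h
  have hjv : (v' (delIdx i' i h)).1
      = if (v i).1 < (v i').1 then (v i).1 else (v i).1 - 1 := by
    rw [hv' i h, delIdx_val]
  unfold driftP
  simp only [Fin.lt_def] at hr ⊢
  split_ifs at hr ⊢ <;> split_ifs at hiv hjv <;> omega

end DelBijHelpers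

end GCS

open GCS in
/-- Lemma `delbij` (III): if `v' = del_{i'}(v)` and
`drift_v(i', v(i')) < k`, then `φ = φ_{i', v(i')}` restricts to a bijection from
`{(i, v(i)) : i ≠ i', drift_v(i, v(i)) < k}` onto
`{(i, v'(i)) : drift_{v'}(i, v'(i)) < k - 1}`. -/
theorem deletion_bijection_on_low_drift
    (n : ℕ) (v : Equiv.Perm (Fin (n + 1))) (i' : Fin (n + 1)) (v' : Equiv.Perm (Fin n))
    (hv' : ∀ (c : Fin (n + 1)) (h : c ≠ i'),
      v' (delIdx i' c h) = delIdx (v i') (v c) (fun hh => h (v.injective hh)))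
    (k : ℕ) (hk1 : 1 ≤ k) (hk : k ≤ n + 1)
    (hdrift : driftP (n + 1) v i' (v i') < k) :
    (∀ (i : Fin (n + 1)) (h : i ≠ i'), driftP (n + 1) v i (v i) < k →
      driftP n v' (delIdx i' i h) (v' (delIdx i' i h)) < k - 1) ∧
    (∀ (i₁ i₂ : Fin (n + 1)) (h₁ : i₁ ≠ i') (h₂ : i₂ ≠ i'),
      driftP (n + 1) v i₁ (v i₁) < k → driftP (n + 1) v i₂ (v i₂) < k →
      delIdx i' i₁ h₁ = delIdx i' i₂ h₂ → i₁ = i₂) ∧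
    (∀ j : Fin n, driftP n v' j (v' j) < k - 1 →
      ∃ (i : Fin (n + 1)) (h : i ≠ i'), driftP (n + 1) v i (v i) < k ∧
        delIdx i' i h = j) := by
  classical
  refine ⟨?_, ?_, ?_⟩
  · intro i h hlt
    have hd := drift_del n v i' v' hv' i h
    by_cases hcase : i' < i ∨ v i' < v i
    · rw [if_pos hcase] at hd; omega
    · rw [if_neg hcase] at hd
      push_neg at hcase
      have hi : i < i' := lt_of_le_of_ne hcase.1 h
      have hj : v i < v i' :=
        lt_of_le_of_ne hcase.2 (fun hh => h (v.injective hh))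
      have hnw := drift_nw_lt (n + 1) v i i' hi hj
      omega
  · intro i₁ i₂ h₁ h₂ _ _ heq
    exact delIdx_inj i' i₁ i₂ h₁ h₂ heq
  · intro j hj
    have hne := insIdx_ne i' j
    have hdel : delIdx i' (insIdx i' j) hne = j := delIdx_insIdx i' j hne
    refine ⟨insIdx i' j, hne, ?_, hdel⟩
    have hd := drift_del n v i' v' hv' (insIdx i' j) hne
    rw [hdel] at hd
    split_ifs at hd <;> omega
end

section
/- Let w and w' be words on the alphabet [1,m] that are Knuth equivalent, and let [a,a'] ⊆ [1,m] be an interval. Then width_{[a,a']}(w) = width_{[a,a']}(w'). -/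
namespace SchenstedAux

lemma sublist_three {l : List ℕ} {x y z : ℕ} (h : l.Sublist [x,y,z]) :
    l = [] ∨ l = [x] ∨ l = [y] ∨ l = [z] ∨ l = [x,y] ∨ l = [x,z] ∨ l = [y,z] ∨ l = [x,y,z] := by
  have := List.mem_sublists.mpr h
  simp [List.sublists] at this
  tauto

/-- Transfer decreasing sublists across a replaced middle segment. -/
lemma transfer (A B M1 M2 : List ℕ)
    (H : ∀ t : List ℕ, t.Sublist M1 → List.Chain' (· > ·) t →
      ∃ t', t'.Sublist M2 ∧ List.Chain' (· > ·) t' ∧ t'.length = t.length ∧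
        (∀ x ∈ t'.head?, ∃ y ∈ t.head?, x ≤ y) ∧
        (∀ x ∈ t'.getLast?, ∃ y ∈ t.getLast?, y ≤ x))
    (s : List ℕ) (hs : s.Sublist (A ++ (M1 ++ B))) (hc : List.Chain' (· > ·) s) :
    ∃ t, t.Sublist (A ++ (M2 ++ B)) ∧ List.Chain' (· > ·) t ∧ t.length = s.length := by
  rw [List.sublist_append_iff] at hs
  obtain ⟨sa, t0, rfl, hsa, ht0⟩ := hs
  rw [List.sublist_append_iff] at ht0
  obtain ⟨tm, sb, rfl, htm, hsb⟩ := ht0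
  rw [List.Chain', List.isChain_append] at hc
  obtain ⟨hca, hcrest, hbd1⟩ := hc
  rw [List.isChain_append] at hcrest
  obtain ⟨hctm, hcb, hbd2⟩ := hcrest
  obtain ⟨tm', htm', hctm', hlen, hhead, hlast⟩ := H tm htm hctm
  refine ⟨sa ++ (tm' ++ sb), hsa.append (htm'.append hsb), ?_, by simp [hlen]⟩
  rw [List.Chain', List.isChain_append]
  refine ⟨hca, ?_, ?_⟩
  · rw [List.isChain_append]
    refine ⟨hctm', hcb, ?_⟩
    intro x hx z hz
    obtain ⟨y, hy, hyx⟩ := hlast x hx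
    have := hbd2 y hy z hz
    omega
  · intro x hx z hz
    rw [List.head?_append] at hz
    cases htm'' : tm' with
    | nil =>
      have : tm = [] := by
        have := hlen; rw [htm''] at this; simpa using (List.length_eq_zero_iff.mp this.symm)
      subst this
      rw [htm''] at hz
      simp only [List.head?_nil, Option.none_or] at hz
      exact hbd1 x hx z (by simpa using hz)
    | cons h' t'' =>
      rw [htm''] at hz
      have hz' : z = h' := by
        simp only [List.head?_cons, Option.mem_def] at hz
        rw [show ((some h').or sb.head?) = some h' from rfl] at hz
        exact (Option.some.injEq _ _ ▸ hz).symm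
      subst hz'
      obtain ⟨y, hy, hzy⟩ := hhead z (by rw [htm'']; simp)
      have : tm ≠ [] := by intro hnil; rw [hnil] at hy; simp at hy
      have hxy : x > y := by
        apply hbd1 x hx y
        rw [List.head?_append]
        cases tm with
        | nil => simp_all
        | cons a l => simpa using hy
      omega


/-- Shorthand for the hypothesis of `transfer`. -/
def Repl (M1 M2 : List ℕ) : Prop :=
  ∀ t : List ℕ, t.Sublist M1 → List.Chain' (· > ·) t →
    ∃ t', t'.Sublist M2 ∧ List.Chain' (· > ·) t' ∧ t'.length = t.length ∧
      (∀ x ∈ t'.head?, ∃ y ∈ t.head?, x ≤ y) ∧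
      (∀ x ∈ t'.getLast?, ∃ y ∈ t.getLast?, y ≤ x)

lemma repl_id {M1 M2 : List ℕ}
    (hsub : ∀ t : List ℕ, t.Sublist M1 → List.Chain' (· > ·) t → t.Sublist M2) :
    Repl M1 M2 :=
  fun t ht hc => ⟨t, hsub t ht hc, hc, rfl, fun x hx => ⟨x, hx, le_refl x⟩,
    fun x hx => ⟨x, hx, le_refl x⟩⟩

lemma K1a {p q r : ℕ} (h1 : p ≤ q) (h2 : q < r) : Repl [p,r,q] [r,p,q] := by
  apply repl_id
  intro t ht hc
  rcases sublist_three ht with rfl|rfl|rfl|rfl|rfl|rfl|rfl|rfl <;>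
    first
      | (simp; done)
      | (exfalso; simp [List.Chain'] at hc; omega)

lemma K1b {p q r : ℕ} (h1 : p ≤ q) (h2 : q < r) : Repl [r,p,q] [p,r,q] := by
  intro t ht hc
  rcases sublist_three ht with rfl|rfl|rfl|rfl|rfl|rfl|rfl|rfl <;>
    first
      | (exfalso; simp [List.Chain'] at hc; omega)
      | (refine ⟨_, ?_, hc, rfl, fun x hx => ⟨x, hx, le_refl x⟩,
          fun x hx => ⟨x, hx, le_refl x⟩⟩; simp; done)
      | (refine ⟨[r,q], ?_, ?_, rfl, ?_, ?_⟩ <;> simp [List.Chain'] <;> omega)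

lemma K2a {p q r : ℕ} (h1 : p < q) (h2 : q ≤ r) : Repl [q,p,r] [q,r,p] := by
  apply repl_id
  intro t ht hc
  rcases sublist_three ht with rfl|rfl|rfl|rfl|rfl|rfl|rfl|rfl <;>
    first
      | (simp; done)
      | (exfalso; simp [List.Chain'] at hc; omega)

lemma K2b {p q r : ℕ} (h1 : p < q) (h2 : q ≤ r) : Repl [q,r,p] [q,p,r] := by
  intro t ht hc
  rcases sublist_three ht with rfl|rfl|rfl|rfl|rfl|rfl|rfl|rfl <;>
    first
      | (exfalso; simp [List.Chain'] at hc; omega)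
      | (refine ⟨_, ?_, hc, rfl, fun x hx => ⟨x, hx, le_refl x⟩,
          fun x hx => ⟨x, hx, le_refl x⟩⟩; simp; done)
      | (refine ⟨[q,p], ?_, ?_, rfl, ?_, ?_⟩ <;> simp [List.Chain'] <;> omega)

end SchenstedAux

namespace SchenstedAux

lemma step_width (a b : ℕ) {w w' : List ℕ} (h : GCS.KnuthStep w w') :
    GCS.widthInterval a b w = GCS.widthInterval a b w' := by
  unfold GCS.widthInterval
  congr 1
  ext d
  set P : ℕ → Bool := fun x => decide (a ≤ x ∧ x ≤ b) with hP
  cases h with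
  | swap1 u v p q r h1 h2 =>
    have e1 : (u ++ p :: r :: q :: v).filter P
        = u.filter P ++ ([p,r,q].filter P ++ v.filter P) := by
      rw [show (p :: r :: q :: v) = [p,r,q] ++ v from rfl, List.filter_append,
        List.filter_append]
    have e2 : (u ++ r :: p :: q :: v).filter P
        = u.filter P ++ ([r,p,q].filter P ++ v.filter P) := by
      rw [show (r :: p :: q :: v) = [r,p,q] ++ v from rfl, List.filter_append,
        List.filter_append]
    simp only [Set.mem_setOf_eq, e1, e2]
    by_cases hp : a ≤ p ∧ p ≤ b <;> by_cases hq : a ≤ q ∧ q ≤ b <;>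
      by_cases hr : a ≤ r ∧ r ≤ b
    · -- all in: the nontrivial case
      have m1 : [p,r,q].filter P = [p,r,q] := by simp [hP, hp, hq, hr]
      have m2 : [r,p,q].filter P = [r,p,q] := by simp [hP, hp, hq, hr]
      rw [m1, m2]
      constructor
      · rintro ⟨s, hs, hc, rfl⟩
        exact transfer _ _ _ _ (K1a h1 h2) s hs hc
      · rintro ⟨s, hs, hc, rfl⟩
        exact transfer _ _ _ _ (K1b h1 h2) s hs hc
    all_goals first
      | (exfalso; omega)
      | (rw [show [p,r,q].filter P = [r,p,q].filter P from by
          simp [hP, hp, hq, hr]])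
  | swap2 u v p q r h1 h2 =>
    have e1 : (u ++ q :: p :: r :: v).filter P
        = u.filter P ++ ([q,p,r].filter P ++ v.filter P) := by
      rw [show (q :: p :: r :: v) = [q,p,r] ++ v from rfl, List.filter_append,
        List.filter_append]
    have e2 : (u ++ q :: r :: p :: v).filter P
        = u.filter P ++ ([q,r,p].filter P ++ v.filter P) := by
      rw [show (q :: r :: p :: v) = [q,r,p] ++ v from rfl, List.filter_append,
        List.filter_append]
    simp only [Set.mem_setOf_eq, e1, e2]
    by_cases hp : a ≤ p ∧ p ≤ b <;> by_cases hq : a ≤ q ∧ q ≤ b <;>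
      by_cases hr : a ≤ r ∧ r ≤ b
    · -- all in: the nontrivial case
      have m1 : [q,p,r].filter P = [q,p,r] := by simp [hP, hp, hq, hr]
      have m2 : [q,r,p].filter P = [q,r,p] := by simp [hP, hp, hq, hr]
      rw [m1, m2]
      constructor
      · rintro ⟨s, hs, hc, rfl⟩
        exact transfer _ _ _ _ (K2a h1 h2) s hs hc
      · rintro ⟨s, hs, hc, rfl⟩
        exact transfer _ _ _ _ (K2b h1 h2) s hs hc
    all_goals first
      | (exfalso; omega)
      | (rw [show [q,p,r].filter P = [q,r,p].filter P from by
          simp [hP, hp, hq, hr]])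

end SchenstedAux

open GCS in
/-- Schensted's lemma, `Schenstedlemma`: Knuth equivalent words on the
alphabet `[1,m]` have the same `[a,a']`-width, for any interval `[a,a'] ⊆ [1,m]`. -/
theorem width_eq_of_knuthEquiv
    (m : ℕ) (w w' : List ℕ)
    (hw : ∀ x ∈ w, 1 ≤ x ∧ x ≤ m) (hw' : ∀ x ∈ w', 1 ≤ x ∧ x ≤ m)
    (a a' : ℕ) (ha : 1 ≤ a) (haa : a ≤ a') (ha' : a' ≤ m)
    (h : KnuthEquiv w w') :
    widthInterval a a' w = widthInterval a a' w' := by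
  clear hw hw'
  induction h with
  | rel x y hxy => exact SchenstedAux.step_width a a' hxy
  | refl x => rfl
  | symm x y _ ih => exact ih.symm
  | trans x y z _ _ ih1 ih2 => exact ih1.trans ih2
end

section
/- Let P be a semistandard Young tableau with entries in [1,m] and let [a,a'] ⊆ [1,m]. Then width_{[a,a']}(P) = width_{[a,a']}(word(P)). -/
namespace GCS

/-- strict position ("word order") relation on labelled letters -/
def posR : (ℕ × (ℕ × ℕ)) → (ℕ × (ℕ × ℕ)) → Prop :=
  fun e f => e.2.2 < f.2.2 ∨ (e.2.2 = f.2.2 ∧ f.2.1 < e.2.1)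

instance : IsTrans (ℕ × (ℕ × ℕ)) posR :=
  ⟨fun a b c hab hbc => by unfold posR at *; omega⟩

instance : IsAntisymm (ℕ × (ℕ × ℕ)) posR :=
  ⟨fun a b hab hba => by unfold posR at *; omega⟩

lemma posR_ne {e f : ℕ × (ℕ × ℕ)} (h : posR e f) : e ≠ f := by
  rintro rfl; unfold posR at h; omega

lemma mem_tabWordLbl_iff {T : List (List ℕ)} {e : ℕ × (ℕ × ℕ)} (he : e ∈ tabWordLbl T) :
    e.2.1 < T.length ∧ e.2.2 < (T.getD e.2.1 []).length ∧ e.1 = tabEntry T e.2 := by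
  simp only [tabWordLbl, List.mem_flatMap, List.mem_range, List.mem_filterMap,
    List.mem_reverse, Option.map_eq_some_iff] at he
  obtain ⟨j, hj, r, hr, x, hx, rfl⟩ := he
  rw [List.getElem?_eq_some_iff] at hx
  obtain ⟨h1, h2⟩ := hx
  refine ⟨hr, h1, ?_⟩
  simp only [tabEntry]
  rw [List.getD_eq_getElem _ _ h1]
  exact h2.symm

lemma len_mono {T : List (List ℕ)}
    (hlen : ∀ i, (T.getD (i + 1) []).length ≤ (T.getD i []).length) :
    ∀ i, (T.getD i []).length ≤ (T.getD 0 []).length := by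
  intro i; induction i with
  | zero => exact le_rfl
  | succ n ih => exact (hlen n).trans ih

lemma mem_tabWordLbl_of {T : List (List ℕ)}
    (hlen : ∀ i, (T.getD (i + 1) []).length ≤ (T.getD i []).length)
    {r j : ℕ} (hr : r < T.length) (hj : j < (T.getD r []).length) :
    (tabEntry T (r, j), (r, j)) ∈ tabWordLbl T := by
  simp only [tabWordLbl, List.mem_flatMap, List.mem_range, List.mem_filterMap,
    List.mem_reverse, Option.map_eq_some_iff]
  refine ⟨j, lt_of_lt_of_le hj (len_mono hlen r), r, by simp [hr], (T.getD r []).getD j 0, ?_, rfl⟩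
  rw [List.getElem?_eq_some_iff]
  exact ⟨hj, (List.getD_eq_getElem _ _ hj).symm⟩

lemma pairwise_tabWordLbl (T : List (List ℕ)) : List.Pairwise posR (tabWordLbl T) := by
  rw [tabWordLbl, List.pairwise_flatMap]
  constructor
  · intro j hj
    rw [List.pairwise_filterMap, List.pairwise_reverse]
    refine List.pairwise_lt_range.imp ?_
    · intro r r' hrr e he f hf
      simp only [Option.mem_def, Option.map_eq_some_iff] at he hf
      obtain ⟨x, -, rfl⟩ := he
      obtain ⟨y, -, rfl⟩ := hf
      exact Or.inr ⟨rfl, hrr⟩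
  · refine List.pairwise_lt_range.imp ?_
    intro j j' hjj e he f hf
    simp only [List.mem_filterMap, Option.map_eq_some_iff] at he hf
    obtain ⟨r, -, x, -, rfl⟩ := he
    obtain ⟨r', -, y, -, rfl⟩ := hf
    exact Or.inl hjj

lemma chain'_and {α : Type*} {R S : α → α → Prop} : ∀ {l : List α},
    List.Chain' R l → List.Chain' S l → List.Chain' (fun a b => R a b ∧ S a b) l
  | [], _, _ => List.isChain_nil
  | [_], _, _ => List.isChain_singleton _
  | a :: b :: l, hR, hS => by
    unfold List.Chain' at *
    rw [List.isChain_cons_cons] at *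
    exact ⟨⟨hR.1, hS.1⟩, chain'_and hR.2 hS.2⟩

lemma chain'_imp_mem {α : Type*} {R S : α → α → Prop} : ∀ {l : List α},
    List.Chain' R l → (∀ a ∈ l, ∀ b ∈ l, R a b → S a b) → List.Chain' S l
  | [], _, _ => List.isChain_nil
  | [_], _, _ => List.isChain_singleton _
  | a :: b :: l, hR, h => by
    unfold List.Chain' at *
    rw [List.isChain_cons_cons] at *
    refine ⟨h a (by simp) b (by simp) hR.1, chain'_imp_mem hR.2 ?_⟩
    intro x hx y hy; exact h x (by simp [hx]) y (by simp [hy])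

/-- column weak monotonicity -/
lemma col_mono {P : List (List ℕ)} (hP : IsSSYT P) :
    ∀ (k i j : ℕ), j < (P.getD (i + k) []).length →
      (P.getD i []).getD j 0 ≤ (P.getD (i + k) []).getD j 0 := by
  intro k
  induction k with
  | zero => intro i j _; exact le_rfl
  | succ n ih =>
    intro i j hj
    rw [show i + (n + 1) = i + n + 1 from rfl] at hj ⊢
    have h1 : j < (P.getD (i + n) []).length := lt_of_lt_of_le hj (hP.2.2.1 (i + n))
    have h2 := hP.2.2.2.1 (i + n) j hj
    exact le_of_lt (lt_of_le_of_lt (ih i j h1) h2)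

/-- row weak monotonicity -/
lemma row_mono {P : List (List ℕ)} (hP : IsSSYT P) {i j j' : ℕ}
    (hi : i < P.length) (hjj : j ≤ j') (hj' : j' < (P.getD i []).length) :
    (P.getD i []).getD j 0 ≤ (P.getD i []).getD j' 0 := by
  rcases eq_or_lt_of_le hjj with rfl | hlt
  · exact le_rfl
  have hmem : P.getD i [] ∈ P := by
    rw [List.getD_eq_getElem _ _ hi]; exact List.getElem_mem hi
  have hch := hP.2.1 _ hmem
  unfold List.Chain' at hch
  rw [List.isChain_iff_pairwise, List.pairwise_iff_get] at hch
  have hj : j < (P.getD i []).length := lt_trans hlt hj'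
  have := hch ⟨j, hj⟩ ⟨j', hj'⟩ hlt
  rw [List.getD_eq_getElem _ _ hj, List.getD_eq_getElem _ _ hj']
  simpa using this

lemma ssyt_key {P : List (List ℕ)} (hP : IsSSYT P) {p q : ℕ × ℕ}
    (hp1 : p.1 < P.length) (hp2 : p.2 < (P.getD p.1 []).length)
    (hq1 : q.1 < P.length) (hq2 : q.2 < (P.getD q.1 []).length)
    (hpos : p.2 < q.2 ∨ (p.2 = q.2 ∧ q.1 < p.1))
    (hlt : tabEntry P q < tabEntry P p) :
    q.1 < p.1 ∧ p.2 ≤ q.2 := by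
  rcases hpos with hc | ⟨hc, hr⟩
  · refine ⟨?_, le_of_lt hc⟩
    by_contra hle
    push_neg at hle
    have key : tabEntry P p ≤ tabEntry P q := by
      have h1 : (P.getD p.1 []).getD p.2 0 ≤ (P.getD q.1 []).getD p.2 0 := by
        have e : p.1 + (q.1 - p.1) = q.1 := by omega
        have := col_mono hP (q.1 - p.1) p.1 p.2 (by rw [e]; exact lt_trans hc hq2)
        rwa [e] at this
      have h2 : (P.getD q.1 []).getD p.2 0 ≤ (P.getD q.1 []).getD q.2 0 :=
        row_mono hP hq1 (le_of_lt hc) hq2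
      exact le_trans h1 h2
    omega
  · exact ⟨hr, le_of_eq hc⟩

end GCS



open GCS in
/-- Lemma `tabwidth`: for a semistandard Young tableau `P` with entries
in `[1,m]` and an interval `[a,a'] ⊆ [1,m]`,
`width_{[a,a']}(P) = width_{[a,a']}(word(P))`. -/
theorem tabWidth_eq_wordWidth
    (m : ℕ) (P : List (List ℕ)) (hP : IsSSYT P)
    (hent : ∀ r ∈ P, ∀ x ∈ r, 1 ≤ x ∧ x ≤ m)
    (a a' : ℕ) (ha : 1 ≤ a) (haa : a ≤ a') (ha' : a' ≤ m) :
    tabWidth a a' P = widthInterval a a' (tabWord P) := by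
  have hlen := hP.2.2.1
  unfold tabWidth widthInterval
  congr 1
  ext d
  simp only [Set.mem_setOf_eq]
  constructor
  · rintro ⟨L, hL1, hL2, rfl⟩
    refine ⟨L.map (fun p => tabEntry P p), ?_, ?_, by simp⟩
    · have hch : List.Chain' posR (L.map fun p => (tabEntry P p, p)) := by
        unfold List.Chain'
        rw [List.isChain_map]
        refine List.IsChain.imp (fun p q h => ?_) hL2
        rcases Nat.lt_or_ge p.2 q.2 with h' | h'
        · exact Or.inl h'
        · exact Or.inr ⟨le_antisymm h.2.1 h', h.1⟩
      have hsorted1 : List.Pairwise posR (L.map fun p => (tabEntry P p, p)) :=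
        List.isChain_iff_pairwise.mp hch
      have hnd : (L.map fun p => (tabEntry P p, p)).Nodup :=
        hsorted1.imp (fun h => posR_ne h)
      have hsub : (L.map fun p => (tabEntry P p, p)) ⊆ tabWordLbl P := by
        intro e he
        simp only [List.mem_map] at he
        obtain ⟨p, hp, rfl⟩ := he
        exact mem_tabWordLbl_of hlen (hL1 p hp).1 (hL1 p hp).2.1
      have hS : (L.map fun p => (tabEntry P p, p)).Sublist (tabWordLbl P) :=
        List.sublist_of_subperm_of_pairwise (hnd.subperm hsub) hsorted1
          (pairwise_tabWordLbl P)
      have h2 : (L.map fun p => tabEntry P p).Sublist (tabWord P) := by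
        have := hS.map Prod.fst
        simpa [tabWord, List.map_map, Function.comp_def] using this
      have h3 : (L.map fun p => tabEntry P p).filter (fun x => decide (a ≤ x ∧ x ≤ a'))
          = L.map fun p => tabEntry P p := by
        rw [List.filter_eq_self]
        intro x hx
        simp only [List.mem_map] at hx
        obtain ⟨p, hp, rfl⟩ := hx
        simp only [decide_eq_true_eq]
        exact ⟨(hL1 p hp).2.2.1, (hL1 p hp).2.2.2⟩
      rw [← h3]
      exact h2.filter _
    · unfold List.Chain'
      rw [List.isChain_map]
      exact List.IsChain.imp (fun p q h => h.2.2) hL2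
  · rintro ⟨s, hs, hch, rfl⟩
    have hfe : (tabWord P).filter (fun x => decide (a ≤ x ∧ x ≤ a'))
        = ((tabWordLbl P).filter fun e => decide (a ≤ e.1 ∧ e.1 ≤ a')).map Prod.fst := by
      rw [tabWord, List.filter_map]
      rfl
    rw [hfe, List.sublist_map_iff] at hs
    obtain ⟨S, hS, rfl⟩ := hs
    have hmemS : ∀ e ∈ S, e ∈ tabWordLbl P ∧ a ≤ e.1 ∧ e.1 ≤ a' := by
      intro e he
      have := hS.subset he
      rw [List.mem_filter, decide_eq_true_eq] at this
      exact ⟨this.1, this.2⟩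
    refine ⟨S.map (fun e => e.2), ?_, ?_, by simp⟩
    · intro p hp
      simp only [List.mem_map] at hp
      obtain ⟨e, he, rfl⟩ := hp
      obtain ⟨hel, ha1, ha2⟩ := hmemS e he
      obtain ⟨h1, h2, h3⟩ := mem_tabWordLbl_iff hel
      exact ⟨h1, h2, h3 ▸ ha1, h3 ▸ ha2⟩
    · unfold List.Chain'
      rw [List.isChain_map]
      have hpos : List.Chain' posR S :=
        (List.Pairwise.sublist hS ((pairwise_tabWordLbl P).filter _)).isChain
      have hdec : List.Chain' (fun e f : ℕ × (ℕ × ℕ) => f.1 < e.1) S := by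
        unfold List.Chain' at hch
        rw [List.isChain_map Prod.fst] at hch
        exact hch
      refine chain'_imp_mem (chain'_and hpos hdec) ?_
      intro e he f hf hh
      obtain ⟨he1, he2, he3⟩ := mem_tabWordLbl_iff (hmemS e he).1
      obtain ⟨hf1, hf2, hf3⟩ := mem_tabWordLbl_iff (hmemS f hf).1
      have hlt : tabEntry P f.2 < tabEntry P e.2 := by
        rw [← he3, ← hf3]; exact hh.2
      have := ssyt_key hP he1 he2 hf1 hf2 hh.1 hlt
      exact ⟨this.1, this.2, hlt⟩
end

section
/- Let M ∈ Mat_{m,n}(ℤ≥0) and write RSK(M) = (P, Q). Then for any intervals [a,a'] ⊆ [1,m] and [b,b'] ⊆ [1,n]: width_{[a,a']}(P) = width_{[a,a']}(row(M)) and width_{[b,b']}(Q) = width_{[b,b']}(col(M)). -/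
namespace GCS

variable {m n : ℕ}

/-! ### Auxiliary development for `rsk_preserves_width` -/

section KnuthMachinery

theorem knuthStep_append_right {u v w : List ℕ} (h : KnuthStep u v) :
    KnuthStep (u ++ w) (v ++ w) := by
  cases h with
  | swap1 u' v' p q r h1 h2 =>
    have e1 : (u' ++ p :: r :: q :: v') ++ w = u' ++ p :: r :: q :: (v' ++ w) := by simp
    have e2 : (u' ++ r :: p :: q :: v') ++ w = u' ++ r :: p :: q :: (v' ++ w) := by simp
    rw [e1, e2]; exact .swap1 _ _ _ _ _ h1 h2
  | swap2 u' v' p q r h1 h2 =>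
    have e1 : (u' ++ q :: p :: r :: v') ++ w = u' ++ q :: p :: r :: (v' ++ w) := by simp
    have e2 : (u' ++ q :: r :: p :: v') ++ w = u' ++ q :: r :: p :: (v' ++ w) := by simp
    rw [e1, e2]; exact .swap2 _ _ _ _ _ h1 h2

theorem knuthStep_append_left {u v w : List ℕ} (h : KnuthStep u v) :
    KnuthStep (w ++ u) (w ++ v) := by
  cases h with
  | swap1 u' v' p q r h1 h2 =>
    have e1 : w ++ (u' ++ p :: r :: q :: v') = (w ++ u') ++ p :: r :: q :: v' := by simp
    have e2 : w ++ (u' ++ r :: p :: q :: v') = (w ++ u') ++ r :: p :: q :: v' := by simp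
    rw [e1, e2]; exact .swap1 _ _ _ _ _ h1 h2
  | swap2 u' v' p q r h1 h2 =>
    have e1 : w ++ (u' ++ q :: p :: r :: v') = (w ++ u') ++ q :: p :: r :: v' := by simp
    have e2 : w ++ (u' ++ q :: r :: p :: v') = (w ++ u') ++ q :: r :: p :: v' := by simp
    rw [e1, e2]; exact .swap2 _ _ _ _ _ h1 h2

theorem knuthEquiv_refl (u : List ℕ) : KnuthEquiv u u := Relation.EqvGen.refl u

theorem knuthEquiv_symm {u v : List ℕ} (h : KnuthEquiv u v) : KnuthEquiv v u :=
  Relation.EqvGen.symm _ _ h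

theorem knuthEquiv_trans {u v w : List ℕ} (h1 : KnuthEquiv u v) (h2 : KnuthEquiv v w) :
    KnuthEquiv u w := Relation.EqvGen.trans _ _ _ h1 h2

theorem knuthEquiv_append_right {u v : List ℕ} (h : KnuthEquiv u v) (w : List ℕ) :
    KnuthEquiv (u ++ w) (v ++ w) := by
  induction h with
  | rel x y hxy => exact Relation.EqvGen.rel _ _ (knuthStep_append_right hxy)
  | refl x => exact knuthEquiv_refl _
  | symm x y _ ih => exact knuthEquiv_symm ih
  | trans x y z _ _ ih1 ih2 => exact knuthEquiv_trans ih1 ih2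

theorem knuthEquiv_append_left {u v : List ℕ} (h : KnuthEquiv u v) (w : List ℕ) :
    KnuthEquiv (w ++ u) (w ++ v) := by
  induction h with
  | rel x y hxy => exact Relation.EqvGen.rel _ _ (knuthStep_append_left hxy)
  | refl x => exact knuthEquiv_refl _
  | symm x y _ ih => exact knuthEquiv_symm ih
  | trans x y z _ _ ih1 ih2 => exact knuthEquiv_trans ih1 ih2

theorem knuthEquiv_append {u v u' v' : List ℕ} (h : KnuthEquiv u v) (h' : KnuthEquiv u' v') :
    KnuthEquiv (u ++ u') (v ++ v') :=
  knuthEquiv_trans (knuthEquiv_append_right h u') (knuthEquiv_append_left h' v)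

theorem knuthEquiv_cons {u v : List ℕ} (c : ℕ) (h : KnuthEquiv u v) :
    KnuthEquiv (c :: u) (c :: v) := knuthEquiv_append_left h [c]

end KnuthMachinery

section DecSet

/-- The set of lengths of strictly decreasing sublists of `w`. -/
def decSet (w : List ℕ) : Set ℕ :=
  {d | ∃ s : List ℕ, s.Sublist w ∧ List.Chain' (· > ·) s ∧ s.length = d}

theorem widthInterval_eq (a b : ℕ) (u : List ℕ) :
    widthInterval a b u = sSup (decSet (u.filter fun x => decide (a ≤ x ∧ x ≤ b))) := rfl

theorem sublist_three {l : List ℕ} {a b c : ℕ} (h : l.Sublist [a, b, c]) :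
    l = [] ∨ l = [a] ∨ l = [b] ∨ l = [c] ∨ l = [a, b] ∨ l = [a, c] ∨ l = [b, c] ∨
      l = [a, b, c] := by
  rcases List.sublist_cons_iff.mp h with h1 | ⟨t1, rfl, h1⟩
  · rcases List.sublist_cons_iff.mp h1 with h2 | ⟨t2, rfl, h2⟩
    · rcases List.sublist_cons_iff.mp h2 with h3 | ⟨t3, rfl, h3⟩
      · simp [List.sublist_nil.mp h3]
      · simp [List.sublist_nil.mp h3]
    · rcases List.sublist_cons_iff.mp h2 with h3 | ⟨t3, rfl, h3⟩
      · simp [List.sublist_nil.mp h3]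
      · simp [List.sublist_nil.mp h3]
  · rcases List.sublist_cons_iff.mp h1 with h2 | ⟨t2, rfl, h2⟩
    · rcases List.sublist_cons_iff.mp h2 with h3 | ⟨t3, rfl, h3⟩
      · simp [List.sublist_nil.mp h3]
      · simp [List.sublist_nil.mp h3]
    · rcases List.sublist_cons_iff.mp h2 with h3 | ⟨t3, rfl, h3⟩
      · simp [List.sublist_nil.mp h3]
      · simp [List.sublist_nil.mp h3]

/-- Generic middle-replacement principle for `decSet`. -/
theorem decSet_sub (u v m1 m2 : List ℕ)
    (key : ∀ s2 : List ℕ, s2.Sublist m1 → s2.Pairwise (· > ·) →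
      ∃ s2' : List ℕ, s2'.Sublist m2 ∧ s2'.length = s2.length ∧ s2'.Pairwise (· > ·) ∧
        (∀ y ∈ s2', ∃ z ∈ s2, y ≤ z) ∧ (∀ y ∈ s2', ∃ z ∈ s2, z ≤ y)) :
    decSet (u ++ m1 ++ v) ⊆ decSet (u ++ m2 ++ v) := by
  rintro d ⟨s, hs, hc, rfl⟩
  rw [List.Chain', List.isChain_iff_pairwise] at hc
  rw [List.append_assoc] at hs
  obtain ⟨s1, s23, rfl, hs1, hs23⟩ := List.sublist_append_iff.mp hs
  obtain ⟨s2, s3, rfl, hs2, hs3⟩ := List.sublist_append_iff.mp hs23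
  rw [List.pairwise_append] at hc
  obtain ⟨hp1, hp23, hx1⟩ := hc
  rw [List.pairwise_append] at hp23
  obtain ⟨hp2, hp3, hx23⟩ := hp23
  obtain ⟨s2', h2v, hlen, hpw2, hub, hlb⟩ := key s2 hs2 hp2
  refine ⟨s1 ++ (s2' ++ s3), ?_, ?_, by simp [hlen]⟩
  · rw [List.append_assoc]
    exact hs1.append (h2v.append hs3)
  · rw [List.Chain', List.isChain_iff_pairwise, List.pairwise_append]
    refine ⟨hp1, ?_, ?_⟩
    · rw [List.pairwise_append]
      refine ⟨hpw2, hp3, fun y hy z hz => ?_⟩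
      obtain ⟨w, hw, hwy⟩ := hlb y hy
      exact lt_of_lt_of_le (hx23 w hw z hz) hwy
    · intro x hx y hy
      rcases List.mem_append.mp hy with hy | hy
      · obtain ⟨z, hz, hyz⟩ := hub y hy
        exact lt_of_le_of_lt hyz (hx1 x hx z (by simp [hz]))
      · exact hx1 x hx y (by simp [hy])

theorem knuthStep_decSet {u v : List ℕ} (h : KnuthStep u v) : decSet u = decSet v := by
  cases h with
  | swap1 u' v' p q r h1 h2 =>
    have e1 : u' ++ p :: r :: q :: v' = u' ++ [p, r, q] ++ v' := by simp
    have e2 : u' ++ r :: p :: q :: v' = u' ++ [r, p, q] ++ v' := by simp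
    rw [e1, e2]
    apply Set.Subset.antisymm <;> apply decSet_sub <;> intro s2 hs hpw
    · rcases sublist_three hs with rfl | rfl | rfl | rfl | rfl | rfl | rfl | rfl
      · exact ⟨[], by simp, rfl, by simp, by simp, by simp⟩
      · exact ⟨[p], by simp, rfl, by simp, by simp, by simp⟩
      · exact ⟨[r], by simp, rfl, by simp, by simp, by simp⟩
      · exact ⟨[q], by simp, rfl, by simp, by simp, by simp⟩
      · simp at hpw; omega
      · simp at hpw; omega
      · refine ⟨[r, q], by simp, rfl, by simpa using hpw, by simp, by simp⟩
      · simp at hpw; omega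
    · rcases sublist_three hs with rfl | rfl | rfl | rfl | rfl | rfl | rfl | rfl
      · exact ⟨[], by simp, rfl, by simp, by simp, by simp⟩
      · exact ⟨[r], by simp, rfl, by simp, by simp, by simp⟩
      · exact ⟨[p], by simp, rfl, by simp, by simp, by simp⟩
      · exact ⟨[q], by simp, rfl, by simp, by simp, by simp⟩
      · -- [r, p] ↦ [r, q]
        refine ⟨[r, q], by simp, rfl, by simp <;> omega, ?_, ?_⟩
        · intro y hy
          simp only [List.mem_cons, List.not_mem_nil, or_false] at hy
          rcases hy with rfl | rfl
          · exact ⟨y, by simp⟩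
          · exact ⟨r, by simp, by omega⟩
        · intro y hy
          simp only [List.mem_cons, List.not_mem_nil, or_false] at hy
          rcases hy with rfl | rfl
          · exact ⟨y, by simp⟩
          · exact ⟨p, by simp, by omega⟩
      · refine ⟨[r, q], by simp, rfl, by simpa using hpw, by simp, by simp⟩
      · simp at hpw; omega
      · simp at hpw; omega
  | swap2 u' v' p q r h1 h2 =>
    have e1 : u' ++ q :: p :: r :: v' = u' ++ [q, p, r] ++ v' := by simp
    have e2 : u' ++ q :: r :: p :: v' = u' ++ [q, r, p] ++ v' := by simp
    rw [e1, e2]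
    apply Set.Subset.antisymm <;> apply decSet_sub <;> intro s2 hs hpw
    · rcases sublist_three hs with rfl | rfl | rfl | rfl | rfl | rfl | rfl | rfl
      · exact ⟨[], by simp, rfl, by simp, by simp, by simp⟩
      · exact ⟨[q], by simp, rfl, by simp, by simp, by simp⟩
      · exact ⟨[p], by simp, rfl, by simp, by simp, by simp⟩
      · exact ⟨[r], by simp, rfl, by simp, by simp, by simp⟩
      · refine ⟨[q, p], by simp, rfl, by simpa using hpw, by simp, by simp⟩
      · simp at hpw; omega
      · simp at hpw; omega
      · simp at hpw; omega
    · rcases sublist_three hs with rfl | rfl | rfl | rfl | rfl | rfl | rfl | rfl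
      · exact ⟨[], by simp, rfl, by simp, by simp, by simp⟩
      · exact ⟨[q], by simp, rfl, by simp, by simp, by simp⟩
      · exact ⟨[r], by simp, rfl, by simp, by simp, by simp⟩
      · exact ⟨[p], by simp, rfl, by simp, by simp, by simp⟩
      · simp at hpw; omega
      · refine ⟨[q, p], by simp, rfl, by simpa using hpw, by simp, by simp⟩
      · -- [r, p] ↦ [q, p]
        refine ⟨[q, p], by simp, rfl, by simp <;> omega, ?_, ?_⟩
        · intro y hy
          simp only [List.mem_cons, List.not_mem_nil, or_false] at hy
          rcases hy with rfl | rfl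
          · exact ⟨r, by simp, by omega⟩
          · exact ⟨y, by simp⟩
        · intro y hy
          simp only [List.mem_cons, List.not_mem_nil, or_false] at hy
          rcases hy with rfl | rfl
          · exact ⟨p, by simp, by omega⟩
          · exact ⟨y, by simp⟩
      · simp at hpw; omega
end DecSet
section WidthInvariance

theorem knuthStep_filter {a b : ℕ} {u v : List ℕ} (h : KnuthStep u v) :
    u.filter (fun x => decide (a ≤ x ∧ x ≤ b)) = v.filter (fun x => decide (a ≤ x ∧ x ≤ b)) ∨
    KnuthStep (u.filter (fun x => decide (a ≤ x ∧ x ≤ b)))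
      (v.filter (fun x => decide (a ≤ x ∧ x ≤ b))) := by
  set P : ℕ → Bool := fun x => decide (a ≤ x ∧ x ≤ b) with hPdef
  cases h with
  | swap1 u' v' p q r h1 h2 =>
    by_cases hp : P p = true <;> by_cases hr : P r = true <;> by_cases hq : P q = true <;>
      simp only [List.filter_append, List.filter_cons, hp, hr, hq, if_pos, if_neg,
        Bool.false_eq_true, ite_true, ite_false]
    · right
      have e1 : List.filter P u' ++ p :: r :: q :: List.filter P v' =
          List.filter P u' ++ p :: r :: q :: List.filter P v' := rfl
      exact KnuthStep.swap1 _ _ _ _ _ h1 h2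
    · -- P p, P r, ¬ P q : impossible
      exfalso
      simp only [hPdef, decide_eq_true_eq] at hp hr hq
      exact hq ⟨le_trans hp.1 h1, le_trans (le_of_lt h2) hr.2⟩
    all_goals (left; trivial)
  | swap2 u' v' p q r h1 h2 =>
    by_cases hq : P q = true <;> by_cases hp : P p = true <;> by_cases hr : P r = true <;>
      simp only [List.filter_append, List.filter_cons, hp, hr, hq, if_pos, if_neg,
        Bool.false_eq_true, ite_true, ite_false]
    · right
      exact KnuthStep.swap2 _ _ _ _ _ h1 h2
    all_goals
      first
      | (left; trivial)
      | (exfalso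
         simp only [hPdef, decide_eq_true_eq] at *
         omega)

theorem knuthEquiv_width {a b : ℕ} {u v : List ℕ} (h : KnuthEquiv u v) :
    widthInterval a b u = widthInterval a b v := by
  induction h with
  | rel x y hxy =>
    rw [widthInterval_eq, widthInterval_eq]
    rcases knuthStep_filter (a := a) (b := b) hxy with he | hst
    · rw [he]
    · rw [knuthStep_decSet hst]
  | refl x => rfl
  | symm x y _ ih => exact ih.symm
  | trans x y z _ _ ih1 ih2 => exact ih1.trans ih2

end WidthInvariance
section TableauStructure

/-- Helper: `getD` of `set` at the same index. -/
theorem getD_set_self {l : List ℕ} {k : ℕ} (h : k < l.length) (x : ℕ) :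
    (l.set k x).getD k 0 = x := by
  rw [List.getD_eq_getElem?_getD, List.getElem?_set_self h]; rfl

theorem getD_set_ne {l : List ℕ} {k j : ℕ} (h : k ≠ j) (x : ℕ) :
    (l.set k x).getD j 0 = l.getD j 0 := by
  rw [List.getD_eq_getElem?_getD, List.getElem?_set_ne h, ← List.getD_eq_getElem?_getD]

/-- Sorted (weakly increasing) access via `getD`. -/
theorem sorted_getD_le {l : List ℕ} (h : List.Chain' (· ≤ ·) l) {i j : ℕ}
    (hij : i ≤ j) (hj : j < l.length) : l.getD i 0 ≤ l.getD j 0 := by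
  rcases eq_or_lt_of_le hij with rfl | hij'
  · exact le_refl _
  · rw [List.Chain', List.isChain_iff_pairwise, List.pairwise_iff_getElem] at h
    rw [List.getD_eq_getElem _ _ (lt_of_le_of_lt hij hj), List.getD_eq_getElem _ _ hj]
    exact h i j _ _ hij'

theorem chain'_le_iff_getD {l : List ℕ} :
    List.Chain' (· ≤ ·) l ↔ ∀ i, i + 1 < l.length → l.getD i 0 ≤ l.getD (i + 1) 0 := by
  rw [List.Chain', List.isChain_iff_getElem]
  constructor
  · intro h i hi
    have := h i (by omega)
    rwa [List.getD_eq_getElem _ _ (by omega), List.getD_eq_getElem _ _ hi]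
  · intro h i hi
    have := h i (by omega)
    rwa [List.getD_eq_getElem _ _ (by omega), List.getD_eq_getElem _ _ (by omega)] at this

/-- Characterization of a successful `findIdx?` for the bumping predicate. -/
theorem findIdx?_some_facts {x k : ℕ} {l : List ℕ}
    (h : l.findIdx? (fun y => decide (x < y)) = some k) :
    k < l.length ∧ x < l.getD k 0 ∧ ∀ i < k, l.getD i 0 ≤ x := by
  obtain ⟨hk, hfi⟩ := List.findIdx?_eq_some_iff_findIdx_eq.mp h
  subst hfi
  refine ⟨hk, ?_, ?_⟩
  · have := List.findIdx_getElem (w := hk)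
    rw [List.getD_eq_getElem _ _ hk]
    simpa using this
  · intro i hi
    have := List.not_of_lt_findIdx hi
    rw [List.getD_eq_getElem _ _ (lt_trans hi hk)]
    simpa using this

theorem findIdx?_none_facts {x : ℕ} {l : List ℕ}
    (h : l.findIdx? (fun y => decide (x < y)) = none) :
    ∀ e ∈ l, e ≤ x := by
  intro e he
  have := List.findIdx?_eq_none_iff.mp h e he
  simpa using this

/-- The structural tableau property: sorted rows, weakly decreasing row lengths,
strictly increasing columns. -/
def Tb (T : List (List ℕ)) : Prop :=
  (∀ r ∈ T, List.Chain' (· ≤ ·) r) ∧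
  (∀ i, (T.getD (i + 1) []).length ≤ (T.getD i []).length) ∧
  (∀ i j, j < (T.getD (i + 1) []).length →
    (T.getD i []).getD j 0 < (T.getD (i + 1) []).getD j 0)

theorem Tb_nil : Tb [] := by
  refine ⟨by simp, fun i => by simp [List.getD], fun i j hj => by simp [List.getD] at hj⟩

theorem Tb_tail {row : List ℕ} {rest : List (List ℕ)} (h : Tb (row :: rest)) : Tb rest := by
  obtain ⟨h1, h2, h3⟩ := h
  exact ⟨fun r hr => h1 r (by simp [hr]), fun i => h2 (i + 1), fun i j hj => h3 (i + 1) j hj⟩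

theorem insert_Tb : ∀ (T : List (List ℕ)) (x : ℕ), Tb T → Tb (rowInsert T x) := by
  intro T
  induction T with
  | nil =>
    intro x _
    refine ⟨by simp [rowInsert, List.Chain'], fun i => by simp [rowInsert, List.getD_eq_default],
      fun i j hj => ?_⟩
    simp [rowInsert, List.getD_eq_default] at hj
  | cons row rest ih =>
    intro x hT
    obtain ⟨hsort, hlen, hcol⟩ := hT
    have hrowsort : List.Chain' (· ≤ ·) row := hsort row (by simp)
    have htail : Tb rest := Tb_tail ⟨hsort, hlen, hcol⟩
    cases hf : row.findIdx? (fun y => decide (x < y)) with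
    | none =>
      have hall : ∀ e ∈ row, e ≤ x := findIdx?_none_facts hf
      simp only [rowInsert, hf]
      refine ⟨?_, ?_, ?_⟩
      · intro r hr
        rcases List.mem_cons.mp hr with rfl | hr
        · rw [List.Chain', List.isChain_iff_pairwise, List.pairwise_append]
          refine ⟨(List.isChain_iff_pairwise).mp hrowsort, by simp, ?_⟩
          intro e he y hy
          simp only [List.mem_singleton] at hy
          subst hy
          exact hall e he
        · exact hsort r (by simp [hr])
      · intro i
        cases i with
        | zero =>
          have := hlen 0
          simp only [List.getD_cons_succ, List.getD_cons_zero] at this ⊢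
          simp only [List.length_append, List.length_singleton]
          omega
        | succ i =>
          have := hlen (i + 1)
          simpa using this
      · intro i j hj
        cases i with
        | zero =>
          have hj' : j < (rest.getD 0 []).length := by simpa using hj
          have hjrow : j < row.length := lt_of_lt_of_le hj' (by simpa using hlen 0)
          have := hcol 0 j (by simpa using hj')
          simp only [List.getD_cons_succ, List.getD_cons_zero] at this ⊢
          rwa [List.getD_append _ _ _ _ hjrow]
        | succ i =>
          have := hcol (i + 1) j (by simpa using hj)
          simpa using this
    | some k =>
      obtain ⟨hk, hxy, hbefore⟩ := findIdx?_some_facts hf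
      simp only [rowInsert, hf]
      set y := row.getD k 0 with hy
      have hIH : Tb (rowInsert rest y) := ih y htail
      -- sortedness of the modified first row
      have hset_sorted : List.Chain' (· ≤ ·) (row.set k x) := by
        rw [chain'_le_iff_getD]
        intro i hi
        rw [List.length_set] at hi
        rcases lt_trichotomy (i + 1) k with h1 | h1 | h1
        · rw [getD_set_ne (by omega), getD_set_ne (by omega)]
          exact sorted_getD_le hrowsort (by omega) (by omega)
        · rw [getD_set_ne (by omega), h1, getD_set_self hk]
          exact hbefore i (by omega)
        · rcases eq_or_lt_of_le (Nat.succ_le_of_lt h1) with h2 | h2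
          · -- i = k
            have : i = k := by omega
            subst this
            rw [getD_set_self (by omega), getD_set_ne (by omega)]
            exact le_trans (le_of_lt hxy) (sorted_getD_le hrowsort (by omega) hi)
          · rw [getD_set_ne (by omega), getD_set_ne (by omega)]
            exact sorted_getD_le hrowsort (by omega) hi
      -- facts about the first row of rowInsert rest y, by cases on rest
      refine ⟨?_, ?_, ?_⟩
      · intro r hr
        rcases List.mem_cons.mp hr with rfl | hr
        · exact hset_sorted
        · exact hIH.1 r hr
      · intro i
        cases i with
        | zero =>
          simp only [List.getD_cons_succ, List.getD_cons_zero, List.length_set]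
          -- length of first row of rowInsert rest y ≤ row.length
          cases rest with
          | nil =>
            simp only [rowInsert, List.getD_cons_zero, List.length_singleton]
            omega
          | cons s t =>
            cases hf2 : s.findIdx? (fun e => decide (y < e)) with
            | none =>
              have hall2 : ∀ e ∈ s, e ≤ y := findIdx?_none_facts hf2
              have hslen : s.length ≤ k := by
                by_contra hcon
                push_neg at hcon
                have h1 := hcol 0 k (by simpa using hcon)
                simp only [List.getD_cons_succ, List.getD_cons_zero] at h1
                have h2 : s.getD k 0 ∈ s := by
                  rw [List.getD_eq_getElem _ _ (by omega)]
                  exact List.getElem_mem _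
                exact absurd (hall2 _ h2) (by omega)
              simp only [rowInsert, hf2, List.getD_cons_zero, List.length_append,
                List.length_singleton]
              omega
            | some k' =>
              have h0 := hlen 0
              simp only [List.getD_cons_succ, List.getD_cons_zero] at h0
              simp only [rowInsert, hf2, List.getD_cons_zero, List.length_set]
              exact h0
        | succ i =>
          simp only [List.getD_cons_succ]
          exact hIH.2.1 i
      · intro i j hj
        cases i with
        | zero =>
          simp only [List.getD_cons_succ, List.getD_cons_zero] at hj ⊢
          -- compare row.set k x with first row of rowInsert rest y
          cases rest with
          | nil =>
            simp only [rowInsert, List.getD_cons_zero, List.length_singleton] at hj ⊢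
            have hj0 : j = 0 := by omega
            subst hj0
            have : (row.set k x).getD 0 0 ≤ x := by
              rcases Nat.eq_zero_or_pos k with rfl | hkpos
              · rw [getD_set_self hk]
              · rw [getD_set_ne (by omega)]
                exact hbefore 0 hkpos
            simp only [List.getD_cons_zero]
            omega
          | cons s t =>
            have h0 := hlen 0
            simp only [List.getD_cons_succ, List.getD_cons_zero] at h0
            cases hf2 : s.findIdx? (fun e => decide (y < e)) with
            | none =>
              have hall2 : ∀ e ∈ s, e ≤ y := findIdx?_none_facts hf2
              have hslen : s.length ≤ k := by
                by_contra hcon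
                push_neg at hcon
                have h1 := hcol 0 k (by simpa using hcon)
                simp only [List.getD_cons_succ, List.getD_cons_zero] at h1
                have h2 : s.getD k 0 ∈ s := by
                  rw [List.getD_eq_getElem _ _ (by omega)]
                  exact List.getElem_mem _
                exact absurd (hall2 _ h2) (by omega)
              simp only [rowInsert, hf2, List.getD_cons_zero] at hj ⊢
              simp only [List.length_append, List.length_singleton] at hj
              rcases lt_or_eq_of_le (Nat.lt_succ_iff.mp hj) with hjs | hjs
              · rw [List.getD_append _ _ _ _ hjs, getD_set_ne (by omega)]
                have := hcol 0 j (by simpa using hjs)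
                simpa using this
              · subst hjs
                rw [List.getD_append_right _ _ _ _ (le_refl _), Nat.sub_self]
                simp only [List.getD_cons_zero]
                rcases eq_or_lt_of_le hslen with h1 | h1
                · rw [h1, getD_set_self hk]
                  exact hxy
                · rw [getD_set_ne (by omega)]
                  exact lt_of_le_of_lt (hbefore _ h1) hxy
            | some k' =>
              obtain ⟨hk', hyk', hbefore2⟩ := findIdx?_some_facts hf2
              have hk'k : k' ≤ k := by
                by_contra hcon
                push_neg at hcon
                have h1 := hcol 0 k (by simpa using lt_trans hcon hk')
                simp only [List.getD_cons_succ, List.getD_cons_zero] at h1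
                exact absurd (hbefore2 k hcon) (by omega)
              simp only [rowInsert, hf2, List.getD_cons_zero] at hj ⊢
              rw [List.length_set] at hj
              rcases eq_or_ne j k' with rfl | hjk'
              · rw [getD_set_self hk']
                rcases eq_or_lt_of_le hk'k with h1 | h1
                · rw [h1, getD_set_self hk]
                  exact hxy
                · rw [getD_set_ne (by omega)]
                  exact lt_of_le_of_lt (hbefore _ h1) hxy
              · rw [getD_set_ne (Ne.symm hjk')]
                have hcj := hcol 0 j (by simpa using hj)
                simp only [List.getD_cons_succ, List.getD_cons_zero] at hcj
                rcases eq_or_ne j k with rfl | hjk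
                · rw [getD_set_self hk]
                  omega
                · rw [getD_set_ne (Ne.symm hjk)]
                  exact hcj
        | succ i =>
          simp only [List.getD_cons_succ] at hj ⊢
          exact hIH.2.2 i j hj

end TableauStructure
section InsertionWord

/-- The row reading word: rows read left to right, bottom row first. -/
def rowRead (T : List (List ℕ)) : List ℕ := T.reverse.flatten

theorem rowRead_cons (row : List ℕ) (rest : List (List ℕ)) :
    rowRead (row :: rest) = rowRead rest ++ row := by
  simp [rowRead]

theorem rowRead_concat (T : List (List ℕ)) (R : List ℕ) :
    rowRead (T ++ [R]) = R ++ rowRead T := by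
  simp [rowRead]

theorem bubble1 : ∀ (B : List ℕ) (c x : ℕ), List.Chain' (· ≤ ·) B → (∀ e ∈ B, c ≤ e) →
    x < c → KnuthEquiv (c :: x :: B) (c :: (B ++ [x]))
  | [], c, x, _, _, _ => knuthEquiv_refl _
  | d :: B', c, x, hs, hb, hx => by
    have hcd : c ≤ d := hb d (by simp)
    have h1 : KnuthEquiv (d :: x :: B') (d :: (B' ++ [x])) :=
      bubble1 B' d x hs.tail
        (fun e he => (List.pairwise_cons.mp ((List.isChain_iff_pairwise).mp hs)).1 e he)
        (lt_of_lt_of_le hx hcd)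
    have step : KnuthStep ([] ++ c :: x :: d :: B') ([] ++ c :: d :: x :: B') :=
      KnuthStep.swap2 [] B' x c d hx hcd
    simp only [List.nil_append] at step
    exact knuthEquiv_trans (Relation.EqvGen.rel _ _ step) (knuthEquiv_cons c h1)

theorem bubble2 : ∀ (A : List ℕ) (x y : ℕ) (B : List ℕ), List.Chain' (· ≤ ·) A →
    (∀ e ∈ A, e ≤ x) → x < y → KnuthEquiv (A ++ y :: x :: B) (y :: (A ++ x :: B))
  | [], _, _, _, _, _, _ => knuthEquiv_refl _
  | a :: A', x, y, B, hs, hb, hxy => by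
    have IH : KnuthEquiv (A' ++ y :: x :: B) (y :: (A' ++ x :: B)) :=
      bubble2 A' x y B hs.tail (fun e he => hb e (by simp [he])) hxy
    cases hA : A' ++ x :: B with
    | nil => simp at hA
    | cons q0 restL =>
      have hq0 : a ≤ q0 ∧ q0 < y := by
        cases A' with
        | nil =>
          simp only [List.nil_append, List.cons.injEq] at hA
          exact ⟨hA.1 ▸ hb a (by simp), hA.1 ▸ hxy⟩
        | cons a' A'' =>
          simp only [List.cons_append, List.cons.injEq] at hA
          refine ⟨hA.1 ▸ (List.isChain_cons_cons.mp hs).1, hA.1 ▸ ?_⟩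
          exact lt_of_le_of_lt (hb a' (by simp)) hxy
      have step : KnuthStep ([] ++ a :: y :: q0 :: restL) ([] ++ y :: a :: q0 :: restL) :=
        KnuthStep.swap1 [] restL a q0 y hq0.1 hq0.2
      simp only [List.nil_append] at step
      have e1 : (a :: A') ++ y :: x :: B = a :: (A' ++ y :: x :: B) := by simp
      have e2 : y :: ((a :: A') ++ x :: B) = y :: a :: q0 :: restL := by
        simp [hA]
      rw [e1, e2]
      exact knuthEquiv_trans (knuthEquiv_cons a IH)
        (by rw [hA]; exact Relation.EqvGen.rel _ _ step)

/-- The single-row bumping lemma. -/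
theorem bump_equiv {row : List ℕ} {x k : ℕ} (hs : List.Chain' (· ≤ ·) row)
    (hf : row.findIdx? (fun y => decide (x < y)) = some k) :
    KnuthEquiv (row ++ [x]) (row.getD k 0 :: row.set k x) := by
  obtain ⟨hk, hxy, hbefore⟩ := findIdx?_some_facts hf
  set A := row.take k with hA
  set y := row.getD k 0 with hy
  set B := row.drop (k + 1) with hB
  have hrow : row = A ++ y :: B := by
    rw [hA, hB, hy, List.getD_eq_getElem _ _ hk]
    rw [List.getElem_cons_drop]
    exact (List.take_append_drop k row).symm
  have hset : row.set k x = A ++ x :: B := by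
    rw [List.set_eq_take_append_cons_drop]
    simp [hk, hA, hB]
  have hpar : List.Pairwise (· ≤ ·) (A ++ y :: B) := by
    rw [← hrow]; exact List.isChain_iff_pairwise.mp hs
  rw [List.pairwise_append] at hpar
  have hsB : List.Chain' (· ≤ ·) B := List.isChain_iff_pairwise.mpr hpar.2.1.of_cons
  have hyB : ∀ e ∈ B, y ≤ e := (List.pairwise_cons.mp hpar.2.1).1
  have hsA : List.Chain' (· ≤ ·) A := List.isChain_iff_pairwise.mpr hpar.1
  have hAx : ∀ e ∈ A, e ≤ x := by
    intro e he
    obtain ⟨i, hi, rfl⟩ := List.mem_iff_getElem.mp he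
    have hik : i < k := by
      have := hi
      rw [hA, List.length_take] at this
      omega
    have h2 := hbefore i hik
    rw [List.getD_eq_getElem _ _ (lt_trans hik hk)] at h2
    have h3 : A[i] = row[i] := by
      simp [hA]
    rw [h3]
    exact h2
  have e0 : row ++ [x] = A ++ (y :: (B ++ [x])) := by rw [hrow]; simp
  rw [e0, hset]
  exact knuthEquiv_trans
    (knuthEquiv_append_left (knuthEquiv_symm (bubble1 B y x hsB hyB hxy)) A)
    (bubble2 A x y B hsA hAx hxy)

/-- Row insertion changes the row reading word by a Knuth equivalence. -/
theorem insert_word : ∀ (T : List (List ℕ)) (x : ℕ), (∀ r ∈ T, List.Chain' (· ≤ ·) r) →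
    KnuthEquiv (rowRead T ++ [x]) (rowRead (rowInsert T x))
  | [], x, _ => by
    simp only [rowInsert, rowRead, List.reverse_nil, List.flatten_nil, List.nil_append,
      List.reverse_cons, List.flatten]
    exact knuthEquiv_refl _
  | row :: rest, x, hs => by
    cases hf : row.findIdx? (fun y => decide (x < y)) with
    | none =>
      simp only [rowInsert, hf, rowRead_cons]
      rw [List.append_assoc]
      exact knuthEquiv_refl _
    | some k =>
      simp only [rowInsert, hf, rowRead_cons]
      have IH := insert_word rest (row.getD k 0) (fun r hr => hs r (by simp [hr]))
      have h1 : KnuthEquiv (rowRead rest ++ row ++ [x])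
          (rowRead rest ++ (row.getD k 0 :: row.set k x)) := by
        rw [List.append_assoc]
        exact knuthEquiv_append_left (bump_equiv (hs row (by simp)) hf) _
      have h2 : KnuthEquiv (rowRead rest ++ (row.getD k 0 :: row.set k x))
          (rowRead (rowInsert rest (row.getD k 0)) ++ row.set k x) := by
        have e : rowRead rest ++ (row.getD k 0 :: row.set k x) =
            (rowRead rest ++ [row.getD k 0]) ++ row.set k x := by simp
        rw [e]
        exact knuthEquiv_append_right IH _
      exact knuthEquiv_trans h1 h2

theorem tab_concat (w : List ℕ) (x : ℕ) : tab (w ++ [x]) = rowInsert (tab w) x := by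
  simp [tab, List.foldl_concat]

theorem tab_Tb (w : List ℕ) : Tb (tab w) := by
  induction w using List.reverseRecOn with
  | nil => exact Tb_nil
  | append_singleton w x ih => rw [tab_concat]; exact insert_Tb _ _ ih

theorem tab_knuth (w : List ℕ) : KnuthEquiv w (rowRead (tab w)) := by
  induction w using List.reverseRecOn with
  | nil => exact knuthEquiv_refl []
  | append_singleton w x ih =>
    rw [tab_concat]
    exact knuthEquiv_trans (knuthEquiv_append_right ih [x]) (insert_word _ x (tab_Tb w).1)

end InsertionWord
section WidthCorrespondence

theorem Tb_row_sorted {T : List (List ℕ)} (hT : Tb T) (r : ℕ) :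
    List.Chain' (· ≤ ·) (T.getD r []) := by
  rcases lt_or_ge r T.length with h | h
  · rw [List.getD_eq_getElem _ _ h]
    exact hT.1 _ (List.getElem_mem _)
  · rw [List.getD_eq_default _ _ h]
    exact List.isChain_nil

theorem Tb_len_mono {T : List (List ℕ)} (hT : Tb T) (r : ℕ) :
    ∀ d, (T.getD (r + d) []).length ≤ (T.getD r []).length := by
  intro d
  induction d with
  | zero => exact le_refl _
  | succ d ih => exact le_trans (hT.2.1 (r + d)) ih

theorem Tb_len_mono' {T : List (List ℕ)} (hT : Tb T) {r r' : ℕ} (h : r ≤ r') :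
    (T.getD r' []).length ≤ (T.getD r []).length := by
  have := Tb_len_mono hT r (r' - r)
  rwa [Nat.add_sub_cancel' h] at this

theorem Tb_col_strict {T : List (List ℕ)} (hT : Tb T) :
    ∀ (d r j : ℕ), j < (T.getD (r + d + 1) []).length →
      (T.getD r []).getD j 0 < (T.getD (r + d + 1) []).getD j 0 := by
  intro d
  induction d with
  | zero => exact fun r j hj => hT.2.2 r j hj
  | succ d ih =>
    intro r j hj
    have hj' : j < (T.getD (r + d + 1) []).length :=
      lt_of_lt_of_le hj (hT.2.1 (r + d + 1))
    exact lt_trans (ih r j hj') (hT.2.2 (r + d + 1) j hj)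

theorem Tb_col_strict' {T : List (List ℕ)} (hT : Tb T) {r r' j : ℕ} (hrr : r < r')
    (hj : j < (T.getD r' []).length) :
    (T.getD r []).getD j 0 < (T.getD r' []).getD j 0 := by
  have h := Tb_col_strict hT (r' - r - 1) r j
  have e : r + (r' - r - 1) + 1 = r' := by omega
  rw [e] at h
  exact h hj

theorem Tb_row_mono {T : List (List ℕ)} (hT : Tb T) {r j j' : ℕ} (hjj : j ≤ j')
    (hj' : j' < (T.getD r []).length) :
    (T.getD r []).getD j 0 ≤ (T.getD r []).getD j' 0 :=
  sorted_getD_le (Tb_row_sorted hT r) hjj hj'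

/-- Entries of a row-strictly-decreasing list of boxes, read in order, form a sublist of
the row reading word. -/
theorem boxes_sublist : ∀ (T : List (List ℕ)) (L : List (ℕ × ℕ)),
    (∀ p ∈ L, p.1 < T.length ∧ p.2 < (T.getD p.1 []).length) →
    List.Pairwise (fun p q : ℕ × ℕ => q.1 < p.1) L →
    (L.map (tabEntry T)).Sublist (rowRead T) := by
  intro T
  induction T using List.reverseRecOn with
  | nil =>
    intro L hv _
    cases L with
    | nil => simp
    | cons p L' => exact absurd (hv p (by simp)).1 (by simp)
  | append_singleton T₀ R ih =>
    intro L hv hpw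
    rw [rowRead_concat]
    by_cases hcase : ∀ q ∈ L, q.1 < T₀.length
    · have hmapeq : L.map (tabEntry (T₀ ++ [R])) = L.map (tabEntry T₀) := by
        apply List.map_congr_left
        intro q hq
        unfold tabEntry
        rw [List.getD_append _ _ _ _ (hcase q hq)]
      rw [hmapeq]
      refine List.sublist_append_of_sublist_right (ih L ?_ hpw)
      intro q hq
      refine ⟨hcase q hq, ?_⟩
      have := (hv q hq).2
      rwa [List.getD_append _ _ _ _ (hcase q hq)] at this
    · push_neg at hcase
      obtain ⟨q₀, hq₀L, hq₀⟩ := hcase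
      cases L with
      | nil => simp at hq₀L
      | cons p L' =>
        have hq₀p : q₀ = p := by
          rcases List.mem_cons.mp hq₀L with rfl | hmem
          · rfl
          · exfalso
            have := (List.pairwise_cons.mp hpw).1 q₀ hmem
            have hple := (hv p (by simp)).1
            simp only [List.length_append, List.length_singleton] at hple
            omega
        subst hq₀p
        have hp1 : q₀.1 = T₀.length := by
          have := (hv q₀ (by simp)).1
          simp only [List.length_append, List.length_singleton] at this
          omega
        have hrows' : ∀ q ∈ L', q.1 < T₀.length := by
          intro q hq
          have := (List.pairwise_cons.mp hpw).1 q hq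
          omega
        have hgetR : (T₀ ++ [R]).getD q₀.1 [] = R := by
          rw [hp1, List.getD_append_right _ _ _ _ (le_refl _), Nat.sub_self]
          rfl
        have hentry : tabEntry (T₀ ++ [R]) q₀ ∈ R := by
          unfold tabEntry
          rw [hgetR]
          have h2 : q₀.2 < R.length := by
            have := (hv q₀ (by simp)).2
            rwa [hgetR] at this
          rw [List.getD_eq_getElem _ _ h2]
          exact List.getElem_mem _
        have hmapeq : L'.map (tabEntry (T₀ ++ [R])) = L'.map (tabEntry T₀) := by
          apply List.map_congr_left
          intro q hq
          unfold tabEntry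
          rw [List.getD_append _ _ _ _ (hrows' q hq)]
        have hsub' : (L'.map (tabEntry T₀)).Sublist (rowRead T₀) := by
          refine ih L' ?_ (List.pairwise_cons.mp hpw).2
          intro q hq
          refine ⟨hrows' q hq, ?_⟩
          have := (hv q (by simp [hq])).2
          rwa [List.getD_append _ _ _ _ (hrows' q hq)] at this
        have : ([tabEntry (T₀ ++ [R]) q₀] ++ L'.map (tabEntry (T₀ ++ [R]))).Sublist
            (R ++ rowRead T₀) := by
          refine List.Sublist.append (List.singleton_sublist.mpr hentry) ?_
          rw [hmapeq]
          exact hsub'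
        simpa using this

end WidthCorrespondence
section Normalization

theorem getD_concat_self (T₀ : List (List ℕ)) (R : List ℕ) :
    (T₀ ++ [R]).getD T₀.length [] = R := by
  rw [List.getD_append_right _ _ _ _ (le_refl _), Nat.sub_self]
  rfl

/-- A strictly decreasing subsequence of the row reading word comes from boxes in
strictly decreasing rows. -/
theorem subseq_boxes : ∀ (T : List (List ℕ)) (s : List ℕ),
    s.Sublist (rowRead T) → List.Pairwise (· > ·) s →
    (∀ r ∈ T, List.Chain' (· ≤ ·) r) →
    ∃ L : List (ℕ × ℕ), L.map (tabEntry T) = s ∧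
      (∀ p ∈ L, p.1 < T.length ∧ p.2 < (T.getD p.1 []).length) ∧
      List.Pairwise (fun p q : ℕ × ℕ => q.1 < p.1) L := by
  intro T
  induction T using List.reverseRecOn with
  | nil =>
    intro s hs _ _
    have : s = [] := List.sublist_nil.mp (by simpa [rowRead] using hs)
    subst this
    exact ⟨[], by simp, by simp, by simp⟩
  | append_singleton T₀ R ih =>
    intro s hs hpw hsort
    rw [rowRead_concat] at hs
    obtain ⟨s₁, s₂, rfl, h1, h2⟩ := List.sublist_append_iff.mp hs
    have hsort₀ : ∀ r ∈ T₀, List.Chain' (· ≤ ·) r := fun r hr => hsort r (by simp [hr])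
    obtain ⟨L₂, hmap₂, hv₂, hpw₂⟩ :=
      ih s₂ h2 (List.Pairwise.sublist (List.sublist_append_right _ _) hpw) hsort₀
    have htrans : ∀ q ∈ L₂, tabEntry (T₀ ++ [R]) q = tabEntry T₀ q := by
      intro q hq
      unfold tabEntry
      rw [List.getD_append _ _ _ _ (hv₂ q hq).1]
    have hv₂' : ∀ q ∈ L₂, q.1 < (T₀ ++ [R]).length ∧
        q.2 < ((T₀ ++ [R]).getD q.1 []).length := by
      intro q hq
      constructor
      · have := (hv₂ q hq).1
        simp only [List.length_append, List.length_singleton]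
        omega
      · rw [List.getD_append _ _ _ _ (hv₂ q hq).1]
        exact (hv₂ q hq).2
    have hRs : List.Pairwise (· ≤ ·) R := List.isChain_iff_pairwise.mp (hsort R (by simp))
    have hs₁le : List.Pairwise (· ≤ ·) s₁ := List.Pairwise.sublist h1 hRs
    have hs₁gt : List.Pairwise (· > ·) s₁ :=
      List.Pairwise.sublist (List.sublist_append_left _ _) hpw
    match s₁, h1, hs₁le, hs₁gt with
    | [], h1, _, _ =>
      exact ⟨L₂, by simpa using (List.map_congr_left htrans).trans hmap₂, hv₂', hpw₂⟩
    | [e], h1, _, _ =>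
      obtain ⟨j, hj, hje⟩ := List.mem_iff_getElem.mp (List.singleton_sublist.mp h1)
      refine ⟨(T₀.length, j) :: L₂, ?_, ?_, ?_⟩
      · have hheadentry : tabEntry (T₀ ++ [R]) (T₀.length, j) = e := by
          unfold tabEntry
          simp only
          rw [getD_concat_self, List.getD_eq_getElem _ _ hj, hje]
        simp only [List.map_cons, hheadentry, (List.map_congr_left htrans).trans hmap₂]
        simp
      · intro p hp
        rcases List.mem_cons.mp hp with rfl | hp
        · refine ⟨by simp, ?_⟩
          simp only
          rw [getD_concat_self]
          exact hj
        · exact hv₂' p hp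
      · rw [List.pairwise_cons]
        exact ⟨fun q hq => by simpa using (hv₂ q hq).1, hpw₂⟩
    | e1 :: e2 :: rest, h1, hle, hgt =>
      exfalso
      have h1' : e1 ≤ e2 := (List.pairwise_cons.mp hle).1 e2 (by simp)
      have h2' : e1 > e2 := (List.pairwise_cons.mp hgt).1 e2 (by simp)
      omega

/-- Normalizing a row- and entry-decreasing sequence of boxes into an antidiagonal. -/
theorem antidiag_norm {T : List (List ℕ)} (hT : Tb T) (a b : ℕ) :
    ∀ L : List (ℕ × ℕ),
    (∀ p ∈ L, p.1 < T.length ∧ p.2 < (T.getD p.1 []).length ∧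
        a ≤ tabEntry T p ∧ tabEntry T p ≤ b) →
    List.Chain' (fun p q : ℕ × ℕ => q.1 < p.1 ∧ tabEntry T q < tabEntry T p) L →
    ∃ L' : List (ℕ × ℕ), L'.length = L.length ∧
      (∀ p ∈ L', p.1 < T.length ∧ p.2 < (T.getD p.1 []).length ∧
        a ≤ tabEntry T p ∧ tabEntry T p ≤ b) ∧
      List.Chain' (fun p q : ℕ × ℕ =>
        q.1 < p.1 ∧ p.2 ≤ q.2 ∧ tabEntry T q < tabEntry T p) L' ∧
      (∀ p₀ ∈ L.head?, ∀ p₀' ∈ L'.head?,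
        p₀'.1 = p₀.1 ∧ p₀'.2 ≤ p₀.2 ∧ tabEntry T p₀' ≤ tabEntry T p₀)
  | [], _, _ => ⟨[], rfl, by simp, by simp [List.Chain'], by simp⟩
  | p :: L0, hv, hc => by
    obtain ⟨L0', hlen, hv', hc', hhead⟩ :=
      antidiag_norm hT a b L0 (fun q hq => hv q (by simp [hq])) hc.tail
    cases hL0' : L0' with
    | nil =>
      have hL0 : L0 = [] := by
        rw [hL0'] at hlen
        exact (List.length_eq_zero_iff.mp hlen.symm)
      subst hL0
      refine ⟨[p], by simp, ?_, by simp [List.Chain'], by simp⟩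
      intro q hq
      rcases List.mem_singleton.mp hq with rfl
      exact hv q (by simp)
    | cons q' L0'' =>
      subst hL0'
      cases L0 with
      | nil => simp at hlen
      | cons q L0t =>
        obtain ⟨hq1, hq2, hqe⟩ := hhead q (by simp) q' (by simp)
        have hlink : q.1 < p.1 ∧ tabEntry T q < tabEntry T p := (List.isChain_cons_cons.mp hc).1
        have hvp := hv p (by simp)
        have hvq := hv q (by simp)
        have hvq' := hv' q' (by simp)
        have hp'2len : min p.2 q'.2 < (T.getD p.1 []).length :=
          lt_of_le_of_lt (min_le_left _ _) hvp.2.1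
        have hep'le : tabEntry T (p.1, min p.2 q'.2) ≤ tabEntry T p :=
          Tb_row_mono hT (min_le_left _ _) hvp.2.1
        have hlt : tabEntry T q' < tabEntry T (p.1, min p.2 q'.2) := by
          rcases le_total q'.2 p.2 with hle | hle
          · have hmin : min p.2 q'.2 = q'.2 := min_eq_right hle
            show tabEntry T q' < (T.getD p.1 []).getD (min p.2 q'.2) 0
            rw [hmin]
            have : tabEntry T q' = (T.getD q'.1 []).getD q'.2 0 := rfl
            rw [this]
            exact Tb_col_strict' hT (by omega) (by omega)
          · have hmin : min p.2 q'.2 = p.2 := min_eq_left hle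
            show tabEntry T q' < (T.getD p.1 []).getD (min p.2 q'.2) 0
            rw [hmin]
            have h3 : tabEntry T q' ≤ tabEntry T q := by
              show (T.getD q'.1 []).getD q'.2 0 ≤ _
              rw [hq1]
              exact Tb_row_mono hT hq2 hvq.2.1
            exact lt_of_le_of_lt h3 hlink.2
        refine ⟨(p.1, min p.2 q'.2) :: q' :: L0'', by simpa using hlen, ?_, ?_, ?_⟩
        · intro z hz
          rcases List.mem_cons.mp hz with rfl | hz
          · exact ⟨hvp.1, hp'2len, le_trans hvq'.2.2.1 (le_of_lt hlt), le_trans hep'le hvp.2.2.2⟩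
          · exact hv' z hz
        · rw [List.Chain', List.isChain_cons_cons]
          exact ⟨⟨by omega, min_le_right _ _, hlt⟩, hc'⟩
        · intro p₀ hp₀ p₀' hp₀'
          simp only [List.head?_cons, Option.mem_some_iff] at hp₀ hp₀'
          subst hp₀ hp₀'
          exact ⟨rfl, min_le_left _ _, hep'le⟩

end Normalization

section Assembly

theorem tabWidth_eq_width (a b : ℕ) {T : List (List ℕ)} (hT : Tb T) :
    tabWidth a b T = widthInterval a b (rowRead T) := by
  rw [widthInterval_eq]
  unfold tabWidth
  apply congrArg sSup
  ext d
  simp only [decSet, Set.mem_setOf_eq]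
  constructor
  · rintro ⟨L, hv, hc, rfl⟩
    refine ⟨L.map (tabEntry T), ?_, ?_, by simp⟩
    · have hsub : (L.map (tabEntry T)).Sublist (rowRead T) := by
        apply boxes_sublist T L (fun p hp => ⟨(hv p hp).1, (hv p hp).2.1⟩)
        haveI : IsTrans (ℕ × ℕ) (fun p q : ℕ × ℕ => q.1 < p.1) :=
          ⟨fun x y z h1 h2 => lt_trans h2 h1⟩
        rw [← List.isChain_iff_pairwise]
        exact List.IsChain.imp (fun x y h => h.1) hc
      have hall : ∀ e ∈ L.map (tabEntry T),
          (fun x => decide (a ≤ x ∧ x ≤ b)) e = true := by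
        intro e he
        obtain ⟨p, hp, rfl⟩ := List.mem_map.mp he
        simp [(hv p hp).2.2.1, (hv p hp).2.2.2]
      have := List.Sublist.filter (fun x => decide (a ≤ x ∧ x ≤ b)) hsub
      rwa [List.filter_eq_self.mpr hall] at this
    · rw [List.Chain', List.isChain_map]
      exact List.IsChain.imp (fun x y h => h.2.2) hc
  · rintro ⟨s, hs, hcs, rfl⟩
    have hsub : s.Sublist (rowRead T) := hs.trans List.filter_sublist
    have hpw : List.Pairwise (· > ·) s := List.isChain_iff_pairwise.mp hcs
    have hmem : ∀ e ∈ s, a ≤ e ∧ e ≤ b := by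
      intro e he
      have := hs.subset he
      have := List.mem_filter.mp this
      simpa using this.2
    obtain ⟨L, hmap, hv, hpwL⟩ := subseq_boxes T s hsub hpw hT.1
    have hpe : List.Pairwise (fun p q : ℕ × ℕ => tabEntry T q < tabEntry T p) L := by
      have h := hpw
      rw [← hmap] at h
      exact List.pairwise_map.mp h
    have hchain : List.Chain' (fun p q : ℕ × ℕ =>
        q.1 < p.1 ∧ tabEntry T q < tabEntry T p) L := (hpwL.and hpe).isChain
    have hv2 : ∀ p ∈ L, p.1 < T.length ∧ p.2 < (T.getD p.1 []).length ∧
        a ≤ tabEntry T p ∧ tabEntry T p ≤ b := by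
      intro p hp
      have hin : tabEntry T p ∈ s := by
        rw [← hmap]
        exact List.mem_map_of_mem hp
      exact ⟨(hv p hp).1, (hv p hp).2, (hmem _ hin).1, (hmem _ hin).2⟩
    obtain ⟨L', hlen, hv', hc', _⟩ := antidiag_norm hT a b L hv2 hchain
    refine ⟨L', hv', hc', ?_⟩
    rw [hlen, ← List.length_map (f := tabEntry T), hmap]

theorem tab_width_main (a b : ℕ) (w : List ℕ) :
    tabWidth a b (tab w) = widthInterval a b w := by
  rw [tabWidth_eq_width a b (tab_Tb w)]
  exact (knuthEquiv_width (tab_knuth w)).symm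

end Assembly
end GCS

open GCS in
/-- Proposition `goodschensted`: if `RSK(M) = (P, Q)` then for any
intervals `[a,a'] ⊆ [1,m]` and `[b,b'] ⊆ [1,n]`,
`width_{[a,a']}(P) = width_{[a,a']}(row(M))` and
`width_{[b,b']}(Q) = width_{[b,b']}(col(M))`. -/
theorem rsk_preserves_width
    (m n : ℕ) (M : Matrix (Fin m) (Fin n) ℕ) (P Q : List (List ℕ))
    (hP : P = tab (rowWord M)) (hQ : Q = tab (colWord M))
    (a a' b b' : ℕ) (ha : 1 ≤ a) (haa : a ≤ a') (ha' : a' ≤ m)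
    (hb : 1 ≤ b) (hbb : b ≤ b') (hb' : b' ≤ n) :
    tabWidth a a' P = widthInterval a a' (rowWord M) ∧
    tabWidth b b' Q = widthInterval b b' (colWord M) := by
  subst hP hQ
  exact ⟨tab_width_main a a' (rowWord M), tab_width_main b b' (colWord M)⟩
end

section
/- Let M ∈ Mat_{m,n}(ℤ≥0) and let [a,a'] ⊆ [1,m] and [b,b'] ⊆ [1,n] be intervals. Then width_{[a,a']}(row(M)) equals the maximum length d of a sequence of positions (i_1,j_1),…,(i_d,j_d) with M_{i_t,j_t} ≠ 0 for all t, i_1 > i_2 > … > i_d, j_1 < j_2 < … < j_d, and all i_t ∈ [a,a']; likewise width_{[b,b']}(col(M)) equals the maximum length of such a sequence of nonzero antidiagonal positions with all column indices j_t ∈ [b,b']. -/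
namespace GCS

variable {m n : ℕ}

section WidthAux

open scoped List

variable {m n : ℕ}

private lemma mem_rowWordLbl {M : Matrix (Fin m) (Fin n) ℕ} {p : ℕ × Fin n}
    (hp : p ∈ rowWordLbl M) : ∃ r : Fin m, p.1 = r.1 + 1 ∧ M r p.2 ≠ 0 := by
  simp only [rowWordLbl, List.mem_flatMap, List.mem_replicate, List.mem_finRange,
    true_and] at hp
  obtain ⟨c, r, hM, rfl⟩ := hp
  exact ⟨r, rfl, hM⟩

private lemma pairwise_rowWordLbl (M : Matrix (Fin m) (Fin n) ℕ) :
    (rowWordLbl M).Pairwise (fun p q : ℕ × Fin n => q.1 < p.1 → p.2 < q.2) := by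
  rw [rowWordLbl, List.pairwise_flatMap]
  constructor
  · intro c _
    rw [List.pairwise_flatMap]
    refine ⟨fun r _ => ?_, ?_⟩
    · exact List.pairwise_replicate.mpr (Or.inr (fun h => absurd h (lt_irrefl _)))
    · refine (List.pairwise_lt_finRange m).imp ?_
      intro r1 r2 h12 x hx y hy
      rw [List.mem_replicate] at hx hy
      obtain ⟨-, rfl⟩ := hx
      obtain ⟨-, rfl⟩ := hy
      intro hlt
      exact absurd hlt (by simp only [not_lt]; exact Nat.succ_le_succ (le_of_lt h12))
  · refine (List.pairwise_lt_finRange n).imp ?_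
    intro c1 c2 h12 x hx y hy
    simp only [List.mem_flatMap, List.mem_replicate] at hx hy
    obtain ⟨r1, -, -, rfl⟩ := hx
    obtain ⟨r2, -, -, rfl⟩ := hy
    exact fun _ => h12

private lemma exists_lift {M : Matrix (Fin m) (Fin n) ℕ} :
    ∀ t : List (ℕ × Fin n), (∀ p ∈ t, ∃ r : Fin m, p.1 = r.1 + 1 ∧ M r p.2 ≠ 0) →
    ∃ L : List (Fin m × Fin n), L.map (fun q => ((q.1.1 + 1 : ℕ), q.2)) = t ∧
      ∀ q ∈ L, M q.1 q.2 ≠ 0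
  | [], _ => ⟨[], rfl, by simp⟩
  | p :: t, h => by
    obtain ⟨r, hr1, hr2⟩ := h p (List.mem_cons_self)
    obtain ⟨L, hL1, hL2⟩ := exists_lift t (fun q hq => h q (List.mem_cons_of_mem _ hq))
    refine ⟨(r, p.2) :: L, ?_, ?_⟩
    · obtain ⟨p1, p2⟩ := p
      simp only at hr1
      simp [hL1, ← hr1]
    · intro q hq
      rcases List.mem_cons.mp hq with rfl | hq
      · exact hr2
      · exact hL2 q hq

private lemma map_sublist_flatMap {M : Matrix (Fin m) (Fin n) ℕ} :
    ∀ (cs : List (Fin n)) (L : List (Fin m × Fin n)),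
      cs.Pairwise (· < ·) →
      L.Pairwise (fun p q : Fin m × Fin n => p.2 < q.2) →
      (∀ p ∈ L, p.2 ∈ cs ∧ M p.1 p.2 ≠ 0) →
      L.map (fun q => ((q.1.1 + 1 : ℕ), q.2)) <+
        cs.flatMap (fun c => (List.finRange m).flatMap fun r =>
          List.replicate (M r c) (r.1 + 1, c))
  | [], L, _, _, hmem => by
    have hL : L = [] := by
      cases L with
      | nil => rfl
      | cons p L => exact absurd (hmem p (List.mem_cons_self)).1 List.not_mem_nil
    simp [hL]
  | c :: cs, L, hcs, hL, hmem => by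
    obtain ⟨hcrel, hcs'⟩ := List.pairwise_cons.mp hcs
    cases L with
    | nil => simp
    | cons p L' =>
      obtain ⟨hprel, hL'⟩ := List.pairwise_cons.mp hL
      have hp := hmem p (List.mem_cons_self)
      rw [List.flatMap_cons]
      by_cases hpc : p.2 = c
      · have hhead : ((p.1.1 + 1 : ℕ), p.2) ∈
            (List.finRange m).flatMap fun r => List.replicate (M r c) (r.1 + 1, c) := by
          rw [← hpc]
          simp only [List.mem_flatMap, List.mem_replicate, List.mem_finRange, true_and]
          exact ⟨p.1, hp.2, rfl⟩
        have htail : L'.map (fun q => ((q.1.1 + 1 : ℕ), q.2)) <+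
            cs.flatMap (fun c => (List.finRange m).flatMap fun r =>
              List.replicate (M r c) (r.1 + 1, c)) := by
          refine map_sublist_flatMap cs L' hcs' hL' ?_
          intro q hq
          have hq2 := hmem q (List.mem_cons_of_mem _ hq)
          rcases List.mem_cons.mp hq2.1 with h | h
          · exact absurd h (ne_of_gt (hpc ▸ hprel q hq))
          · exact ⟨h, hq2.2⟩
        exact (List.singleton_sublist.mpr hhead).append htail
      · have hmem' : ∀ q ∈ p :: L', q.2 ∈ cs ∧ M q.1 q.2 ≠ 0 := by
          intro q hq
          have hq2 := hmem q hq
          refine ⟨?_, hq2.2⟩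
          rcases List.mem_cons.mp hq2.1 with h | h
          · exfalso
            rcases List.mem_cons.mp hq with rfl | hq'
            · exact hpc h
            · have hp2cs : p.2 ∈ cs := by
                rcases List.mem_cons.mp hp.1 with h' | h'
                · exact absurd h' hpc
                · exact h'
              exact absurd h (ne_of_gt (lt_trans (hcrel _ hp2cs) (hprel q hq')))
          · exact h
        exact (map_sublist_flatMap cs (p :: L') hcs' hL hmem').trans
          (List.sublist_append_right _ _)

private lemma rowSet_eq (M : Matrix (Fin m) (Fin n) ℕ) (a b : ℕ) :
    {d | ∃ s : List ℕ, s.Sublist ((rowWord M).filter fun x => decide (a ≤ x ∧ x ≤ b)) ∧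
      List.Chain' (· > ·) s ∧ s.length = d} =
    {d | ∃ L : List (Fin m × Fin n),
      (∀ p ∈ L, M p.1 p.2 ≠ 0 ∧ a ≤ p.1.1 + 1 ∧ p.1.1 + 1 ≤ b) ∧
      List.Chain' (fun p q => q.1 < p.1 ∧ p.2 < q.2) L ∧ L.length = d} := by
  ext d
  simp only [Set.mem_setOf_eq]
  constructor
  · rintro ⟨s, hs, hchain, rfl⟩
    rw [rowWord, List.filter_map] at hs
    obtain ⟨t, ht, rfl⟩ := List.sublist_map_iff.mp hs
    have htW : t <+ rowWordLbl M := ht.trans (List.filter_sublist)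
    have hbounds : ∀ p ∈ t, a ≤ p.1 ∧ p.1 ≤ b := by
      intro p hp
      have := (List.mem_filter.mp (ht.subset hp)).2
      simpa using this
    obtain ⟨L, hLmap, hLnz⟩ := exists_lift t (fun p hp => mem_rowWordLbl (htW.subset hp))
    have hpairD : t.Pairwise (fun p q : ℕ × Fin n => q.1 < p.1) :=
      List.pairwise_map.mp (List.isChain_iff_pairwise.mp hchain)
    have hpairR := (pairwise_rowWordLbl M).sublist htW
    have hpairC : t.Pairwise (fun p q : ℕ × Fin n => q.1 < p.1 ∧ p.2 < q.2) :=
      (hpairD.and hpairR).imp (fun h => ⟨h.1, h.2 h.1⟩)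
    refine ⟨L, ?_, ?_, ?_⟩
    · intro q hq
      have : ((q.1.1 + 1 : ℕ), q.2) ∈ t := hLmap ▸ List.mem_map_of_mem hq
      exact ⟨hLnz q hq, (hbounds _ this).1, (hbounds _ this).2⟩
    · have := hLmap ▸ hpairC.isChain
      refine (List.isChain_map _ |>.mp this).imp ?_
      intro p q h
      exact ⟨Fin.lt_def.mpr (Nat.lt_of_succ_lt_succ h.1), h.2⟩
    · simpa using congrArg List.length hLmap
  · rintro ⟨L, hmem, hchain, rfl⟩
    refine ⟨L.map fun q => q.1.1 + 1, ?_, ?_, by simp⟩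
    · rw [rowWord, List.filter_map, rowWordLbl]
      have hpairL : L.Pairwise (fun p q : Fin m × Fin n => p.2 < q.2) := by
        have : List.Chain' (· < ·) (L.map Prod.snd) :=
          (List.isChain_map _).mpr (hchain.imp fun _ _ h => h.2)
        exact List.pairwise_map.mp (List.isChain_iff_pairwise.mp this)
      have htW : L.map (fun q => ((q.1.1 + 1 : ℕ), q.2)) <+ rowWordLbl M := by
        rw [rowWordLbl]
        exact map_sublist_flatMap (List.finRange n) L (List.pairwise_lt_finRange n)
          hpairL (fun p hp => ⟨List.mem_finRange _, (hmem p hp).1⟩)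
      have hfil : (L.map fun q => ((q.1.1 + 1 : ℕ), q.2)).filter
          ((fun x => decide (a ≤ x ∧ x ≤ b)) ∘ Prod.fst) =
          L.map fun q => ((q.1.1 + 1 : ℕ), q.2) := by
        rw [List.filter_eq_self]
        intro p hp
        obtain ⟨q, hq, rfl⟩ := List.mem_map.mp hp
        simpa using ⟨(hmem q hq).2.1, (hmem q hq).2.2⟩
      have := (htW.filter ((fun x => decide (a ≤ x ∧ x ≤ b)) ∘ Prod.fst)).map Prod.fst
      rw [hfil] at this
      rw [rowWordLbl] at this
      simpa [List.map_map, Function.comp_def] using this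
    · refine (List.isChain_map _).mpr (hchain.imp ?_)
      intro p q h
      exact Nat.succ_lt_succ (Fin.lt_def.mp h.1)

private lemma col_to_row {m n : ℕ} (A : Matrix (Fin m) (Fin n) ℕ) (b b' d : ℕ) :
    (∃ L : List (Fin m × Fin n),
      (∀ p ∈ L, A p.1 p.2 ≠ 0 ∧ b ≤ p.2.1 + 1 ∧ p.2.1 + 1 ≤ b') ∧
      List.Chain' (fun p q => q.1 < p.1 ∧ p.2 < q.2) L ∧ L.length = d) →
    (∃ L : List (Fin n × Fin m),
      (∀ p ∈ L, A.transpose p.1 p.2 ≠ 0 ∧ b ≤ p.1.1 + 1 ∧ p.1.1 + 1 ≤ b') ∧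
      List.Chain' (fun p q => q.1 < p.1 ∧ p.2 < q.2) L ∧ L.length = d) := by
  rintro ⟨L, hmem, hchain, rfl⟩
  refine ⟨(L.map Prod.swap).reverse, ?_, ?_, by simp⟩
  · intro p hp
    rw [List.mem_reverse] at hp
    obtain ⟨q, hq, rfl⟩ := List.mem_map.mp hp
    exact ⟨(hmem q hq).1, (hmem q hq).2.1, (hmem q hq).2.2⟩
  · rw [List.Chain', List.isChain_reverse, List.isChain_map]
    exact hchain.imp fun p q h => ⟨h.2, h.1⟩

private lemma row_to_col {m n : ℕ} (A : Matrix (Fin m) (Fin n) ℕ) (b b' d : ℕ) :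
    (∃ L : List (Fin m × Fin n),
      (∀ p ∈ L, A p.1 p.2 ≠ 0 ∧ b ≤ p.1.1 + 1 ∧ p.1.1 + 1 ≤ b') ∧
      List.Chain' (fun p q => q.1 < p.1 ∧ p.2 < q.2) L ∧ L.length = d) →
    (∃ L : List (Fin n × Fin m),
      (∀ p ∈ L, A.transpose p.1 p.2 ≠ 0 ∧ b ≤ p.2.1 + 1 ∧ p.2.1 + 1 ≤ b') ∧
      List.Chain' (fun p q => q.1 < p.1 ∧ p.2 < q.2) L ∧ L.length = d) := by
  rintro ⟨L, hmem, hchain, rfl⟩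
  refine ⟨(L.map Prod.swap).reverse, ?_, ?_, by simp⟩
  · intro p hp
    rw [List.mem_reverse] at hp
    obtain ⟨q, hq, rfl⟩ := List.mem_map.mp hp
    exact ⟨(hmem q hq).1, (hmem q hq).2.1, (hmem q hq).2.2⟩
  · rw [List.Chain', List.isChain_reverse, List.isChain_map]
    exact hchain.imp fun p q h => ⟨h.2, h.1⟩

end WidthAux

end GCS

open GCS in
/-- Lemma `matrixwidth`: `width_{[a,a']}(row(M))` equals the maximum
length of a sequence of nonzero antidiagonal positions of `M` (rows strictly decreasing,
columns strictly increasing) with all row indices in `[a,a']`; likewise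
`width_{[b,b']}(col(M))` equals the corresponding maximum with column indices in `[b,b']`. -/
theorem wordWidth_eq_matrixAntidiagWidth
    (m n : ℕ) (M : Matrix (Fin m) (Fin n) ℕ)
    (a a' b b' : ℕ) (ha : 1 ≤ a) (haa : a ≤ a') (ha' : a' ≤ m)
    (hb : 1 ≤ b) (hbb : b ≤ b') (hb' : b' ≤ n) :
    widthInterval a a' (rowWord M) = rowAntidiagWidth a a' M ∧
    widthInterval b b' (colWord M) = colAntidiagWidth b b' M := by
  constructor
  · unfold widthInterval rowAntidiagWidth
    exact congrArg sSup (GCS.rowSet_eq M a a')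
  · show widthInterval b b' (rowWord M.transpose) = _
    unfold widthInterval colAntidiagWidth
    rw [GCS.rowSet_eq M.transpose b b']
    refine congrArg sSup (Set.ext fun d => ⟨?_, ?_⟩)
    · intro h
      simpa [Matrix.transpose_transpose] using GCS.row_to_col M.transpose b b' d h
    · exact GCS.col_to_row M b b' d
end
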